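/- If (G,σ) is an edge-maximal K₅-minor-free graph with balanced signature, then the signed vertex arboricity of (G,σ) is at most 3, i.e., va(G,σ) ≤ 3; equivalently, (G,σ) admits a signed tree-3-coloring with colors from M₃ = {-1,0,1}. -/

import Mathlib

/-- The color set `M n`: `{±1, …, ±k}` if `n = 2k`, and `{0, ±1, …, ±k}` if `n = 2k+1`. -/
def Mset (n : ℕ) : Set ℤ :=
  {j : ℤ | j.natAbs ≤ n / 2 ∧ (n % 2 = 0 → j ≠ 0)}

/-- `σ` is a signature of the graph `G`: every edge gets sign `1` or `-1`. -/
def IsSignature {V : Type*} (G : SimpleGraph V) (σ : Sym2 V → ℤ) : Prop :=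
  ∀ e ∈ G.edgeSet, σ e = 1 ∨ σ e = -1

/-- The monochromatic subgraph `G^c(i, ±)`: its edges are the edges `uv` of `G` with
`c u = σ(uv) * c v` (stated symmetrically) whose endpoints are colored `i` or `-i`. -/
def signedSubgraph {V : Type*} (G : SimpleGraph V) (σ : Sym2 V → ℤ)
    (c : V → ℤ) (i : ℤ) : SimpleGraph V where
  Adj u v := G.Adj u v ∧ (c u = σ s(u, v) * c v ∨ c v = σ s(u, v) * c u) ∧
    (c u = i ∨ c u = -i) ∧ (c v = i ∨ c v = -i)
  symm := ⟨by
    rintro u v ⟨h1, h2, h3, h4⟩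
    exact ⟨h1.symm, by rw [Sym2.eq_swap]; exact h2.symm, h4, h3⟩⟩
  loopless := ⟨fun u ⟨h, _⟩ => G.irrefl h⟩

/-- A signed tree-coloring: every monochromatic subgraph `G^c(c u, ±)` is a forest. -/
def IsSignedTreeColoring {V : Type*} (G : SimpleGraph V) (σ : Sym2 V → ℤ)
    (c : V → ℤ) : Prop :=
  ∀ u : V, (signedSubgraph G σ c (c u)).IsAcyclic

/-- A signed tree-`n`-coloring: a signed tree-coloring with colors in `M n`. -/
def IsSignedTreeNColoring {V : Type*} (G : SimpleGraph V) (σ : Sym2 V → ℤ)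
    (n : ℕ) (c : V → ℤ) : Prop :=
  (∀ v, c v ∈ Mset n) ∧ IsSignedTreeColoring G σ c

/-- The signed vertex arboricity: the least `n` admitting a signed tree-`n`-coloring. -/
noncomputable def signedVertexArboricity {V : Type*} (G : SimpleGraph V)
    (σ : Sym2 V → ℤ) : ℕ :=
  sInf {n : ℕ | ∃ c : V → ℤ, IsSignedTreeNColoring G σ n c}

/-- A signed graph is balanced if every cycle contains an even number of negative edges. -/
def IsBalanced {V : Type*} (G : SimpleGraph V) (σ : Sym2 V → ℤ) : Prop :=
  ∀ ⦃u : V⦄ (w : G.Walk u u), w.IsCycle →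
    Even (List.countP (fun e => decide (σ e = -1)) w.edges)

/-- `G` has a `K₅` minor: five pairwise disjoint nonempty connected branch sets with
an edge of `G` between any two of them. -/
def HasK5Minor {V : Type*} (G : SimpleGraph V) : Prop :=
  ∃ W : Fin 5 → Set V,
    (∀ i, (W i).Nonempty) ∧
    (Pairwise fun i j => Disjoint (W i) (W j)) ∧
    (∀ i, (G.induce (W i)).Connected) ∧
    (Pairwise fun i j => ∃ u ∈ W i, ∃ v ∈ W j, G.Adj u v)

/-- `G` is edge-maximal `K₅`-minor-free. -/
def EdgeMaximalK5MinorFree {V : Type*} (G : SimpleGraph V) : Prop :=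
  ¬ HasK5Minor G ∧ ∀ u v : V, u ≠ v → ¬ G.Adj u v →
    HasK5Minor (G ⊔ SimpleGraph.fromEdgeSet {s(u, v)})

/-- An (unsigned) tree-`k`-coloring: colors in `{1, …, k}`, each class inducing a forest. -/
def IsTreeColoring {V : Type*} (G : SimpleGraph V) (k : ℕ) (φ : V → ℕ) : Prop :=
  (∀ v, φ v ∈ Finset.Icc 1 k) ∧ ∀ i : ℕ, (G.induce (φ ⁻¹' {i})).IsAcyclic

/-- The (unsigned) vertex arboricity: the least `k` admitting a tree-`k`-coloring. -/
noncomputable def vertexArboricity {V : Type*} (G : SimpleGraph V) : ℕ :=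
  sInf {k : ℕ | ∃ φ : V → ℕ, IsTreeColoring G k φ}

namespace Stmt6Aux

open SimpleGraph Finset
open scoped Classical

variable {V : Type*} {W : Type*}

/-- `G` has a `K_k` minor. -/
def KMinor (G : SimpleGraph V) (k : ℕ) : Prop :=
  ∃ B : Fin k → Set V,
    (∀ i, (B i).Nonempty) ∧
    (Pairwise fun i j => Disjoint (B i) (B j)) ∧
    (∀ i, (G.induce (B i)).Connected) ∧
    (Pairwise fun i j => ∃ u ∈ B i, ∃ v ∈ B j, G.Adj u v)

lemma hasK5Minor_iff_kminor (G : SimpleGraph V) : HasK5Minor G ↔ KMinor G 5 := Iff.rfl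

lemma connected_image {G : SimpleGraph V} {s : Set V} {B : Set s}
    (h : ((G.induce s).induce B).Connected) :
    (G.induce (Subtype.val '' B)).Connected := by
  refine h.map ⟨fun x => ⟨x.1.1, ⟨x.1, x.2, rfl⟩⟩, fun hab => hab⟩ ?_
  rintro ⟨v, ⟨w, hw, rfl⟩⟩
  exact ⟨⟨w, hw⟩, rfl⟩

/-- lifting a minor of an induced subgraph -/
lemma kminor_induce {G : SimpleGraph V} {s : Set V} {k : ℕ}
    (h : KMinor (G.induce s) k) :
    ∃ B : Fin k → Set V,
      (∀ i, (B i).Nonempty) ∧ (Pairwise fun i j => Disjoint (B i) (B j)) ∧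
      (∀ i, (G.induce (B i)).Connected) ∧
      (Pairwise fun i j => ∃ u ∈ B i, ∃ v ∈ B j, G.Adj u v) ∧
      (∀ i, B i ⊆ s) := by
  obtain ⟨B, hne, hdisj, hconn, hadj⟩ := h
  refine ⟨fun i => Subtype.val '' B i, ?_, ?_, ?_, ?_, ?_⟩
  · intro i
    obtain ⟨x, hx⟩ := hne i
    exact ⟨x.1, ⟨x, hx, rfl⟩⟩
  · intro i j hij
    rw [Set.disjoint_left]
    rintro a ⟨x, hx, rfl⟩ ⟨y, hy, hyx⟩
    have : y = x := Subtype.ext hyx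
    subst this
    exact Set.disjoint_left.mp (hdisj hij) hx hy
  · intro i
    exact connected_image (hconn i)
  · intro i j hij
    obtain ⟨u, hu, v, hv, huv⟩ := hadj hij
    exact ⟨u.1, ⟨u, hu, rfl⟩, v.1, ⟨v, hv, rfl⟩, huv⟩
  · intro i
    rintro a ⟨x, hx, rfl⟩
    exact x.2

lemma kminor_of_kminor_induce {G : SimpleGraph V} {s : Set V} {k : ℕ}
    (h : KMinor (G.induce s) k) : KMinor G k := by
  obtain ⟨B, h1, h2, h3, h4, _⟩ := kminor_induce h
  exact ⟨B, h1, h2, h3, h4⟩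

lemma singleton_connected (G : SimpleGraph V) (v : V) :
    (G.induce ({v} : Set V)).Connected := by
  have h := (SimpleGraph.Subgraph.singletonSubgraph_connected (G := G) (v := v)).induce_verts
  rwa [singletonSubgraph_verts] at h

/-- adding an apex vertex to a `K_k` minor contained in its neighborhood -/
lemma kminor_star {G : SimpleGraph V} {k : ℕ} (v : V) (B : Fin k → Set V)
    (hne : ∀ i, (B i).Nonempty)
    (hdisj : Pairwise fun i j => Disjoint (B i) (B j))
    (hconn : ∀ i, (G.induce (B i)).Connected)
    (hadj : Pairwise fun i j => ∃ u ∈ B i, ∃ w ∈ B j, G.Adj u w)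
    (hv : ∀ i, B i ⊆ G.neighborSet v) :
    KMinor G (k + 1) := by
  have hvB : ∀ i, v ∉ B i := by
    intro i hvi
    exact G.irrefl (hv i hvi)
  refine ⟨Fin.cons {v} B, ?_, ?_, ?_, ?_⟩
  · refine Fin.cases ?_ ?_
    · exact ⟨v, rfl⟩
    · intro i; simpa using hne i
  · intro i j hij
    refine Fin.cases (motive := fun i => i ≠ j → Disjoint (Fin.cons (α := fun _ => Set V) {v} B i) (Fin.cons (α := fun _ => Set V) {v} B j)) ?_ ?_ i hij
    · intro h0j
      refine Fin.cases (motive := fun j => (0 : Fin (k+1)) ≠ j → Disjoint ({v} : Set V) (Fin.cons (α := fun _ => Set V) {v} B j)) ?_ ?_ j h0j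
      · intro h; exact absurd rfl h
      · intro j _
        simp only [Fin.cons_succ]
        exact Set.disjoint_left.mpr (by rintro a rfl; exact fun h => hvB j h)
    · intro i
      refine Fin.cases (motive := fun j => (Fin.succ i) ≠ j → Disjoint (Fin.cons (α := fun _ => Set V) {v} B (Fin.succ i)) (Fin.cons (α := fun _ => Set V) {v} B j)) ?_ ?_ j
      · intro _
        simp only [Fin.cons_succ, Fin.cons_zero]
        exact Set.disjoint_right.mpr (by rintro a rfl; exact fun h => hvB i h)
      · intro j hij'
        simp only [Fin.cons_succ]
        exact hdisj (fun h => hij' (by rw [h]))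
  · refine Fin.cases ?_ ?_
    · exact singleton_connected G v
    · intro i; exact hconn i
  · intro i j hij
    refine Fin.cases (motive := fun i => i ≠ j → ∃ u ∈ Fin.cons (α := fun _ => Set V) {v} B i, ∃ w ∈ Fin.cons (α := fun _ => Set V) {v} B j, G.Adj u w) ?_ ?_ i hij
    · intro h0j
      refine Fin.cases (motive := fun j => (0 : Fin (k+1)) ≠ j → ∃ u ∈ ({v} : Set V), ∃ w ∈ Fin.cons (α := fun _ => Set V) {v} B j, G.Adj u w) ?_ ?_ j h0j
      · intro h; exact absurd rfl h
      · intro j _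
        obtain ⟨b, hb⟩ := hne j
        exact ⟨v, rfl, b, by simpa using hb, hv j hb⟩
    · intro i
      refine Fin.cases (motive := fun j => (Fin.succ i) ≠ j → ∃ u ∈ Fin.cons (α := fun _ => Set V) {v} B (Fin.succ i), ∃ w ∈ Fin.cons (α := fun _ => Set V) {v} B j, G.Adj u w) ?_ ?_ j
      · intro _
        obtain ⟨b, hb⟩ := hne i
        exact ⟨b, by simpa using hb, v, rfl, (hv i hb).symm⟩
      · intro j hij'
        simpa using hadj (show i ≠ j from fun h => hij' (by rw [h]))

/-- Contraction of the edge `x y` (deleting `y`, merging into `x`). -/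
def contractG (G : SimpleGraph V) (x y : V) : SimpleGraph {v : V // v ≠ y} where
  Adj a b := a ≠ b ∧ (G.Adj a b ∨ ((a : V) = x ∧ G.Adj y b) ∨ ((b : V) = x ∧ G.Adj (a : V) y))
  symm := ⟨by
    rintro a b ⟨hne, hg | ⟨hax, hyb⟩ | ⟨hbx, hay⟩⟩
    · exact ⟨hne.symm, Or.inl hg.symm⟩
    · exact ⟨hne.symm, Or.inr (Or.inr ⟨hax, hyb.symm⟩)⟩
    · exact ⟨hne.symm, Or.inr (Or.inl ⟨hbx, hay.symm⟩)⟩⟩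
  loopless := ⟨fun a h => h.1 rfl⟩

lemma kminor_contract {G : SimpleGraph V} {x y : V} (hxy : G.Adj x y) {k : ℕ}
    (h : KMinor (contractG G x y) k) : KMinor G k := by
  classical
  obtain ⟨B, hne, hdisj, hconn, hadj⟩ := h
  set xx : {v : V // v ≠ y} := ⟨x, hxy.ne⟩ with hxxdef
  set B' : Fin k → Set V := fun i => Subtype.val '' B i ∪ (if xx ∈ B i then {y} else ∅)
    with hB'def
  have hmem : ∀ i (a : {v : V // v ≠ y}), a ∈ B i → (a : V) ∈ B' i :=
    fun i a ha => Or.inl ⟨a, ha, rfl⟩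
  have hymem : ∀ i, xx ∈ B i → y ∈ B' i := by
    intro i hi
    right
    simp [hi]
  have hxmem : ∀ i, y ∈ B' i → xx ∈ B i ∧ x ∈ B' i := by
    intro i hyi
    rcases hyi with ⟨a, _, hav⟩ | hyi
    · exact absurd hav a.2
    · by_cases hc : xx ∈ B i
      · exact ⟨hc, hmem i xx hc⟩
      · simp [hc] at hyi
  have hmem' : ∀ i (v : V), v ∈ B' i → v = y ∨ ∃ hv : v ≠ y, ⟨v, hv⟩ ∈ B i := by
    intro i v hv
    rcases hv with ⟨a, ha, rfl⟩ | hv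
    · exact Or.inr ⟨a.2, ha⟩
    · by_cases hc : xx ∈ B i
      · simp [hc] at hv
        exact Or.inl hv
      · simp [hc] at hv
  -- reachability lifting
  have key : ∀ i (a b : ↥(B i)), ((contractG G x y).induce (B i)).Walk a b →
      (G.induce (B' i)).Reachable ⟨a.1.1, hmem i a.1 a.2⟩ ⟨b.1.1, hmem i b.1 b.2⟩ := by
    intro i a b w
    induction w with
    | nil => exact Reachable.refl _
    | @cons u v w2 huv p ih =>
      refine Reachable.trans ?_ ih
      obtain ⟨hne', hcase⟩ := huv
      rcases hcase with hg | ⟨hux, hyv⟩ | ⟨hvx, huy⟩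
      · exact SimpleGraph.Adj.reachable (by exact hg)
      · have hu : u.1 = xx := Subtype.ext hux
        have hyB : y ∈ B' i := hymem i (hu ▸ u.2)
        have r1 : (G.induce (B' i)).Adj ⟨u.1.1, hmem i u.1 u.2⟩ ⟨y, hyB⟩ := by
          show G.Adj u.1.1 y
          exact hux ▸ hxy
        have r2 : (G.induce (B' i)).Adj ⟨y, hyB⟩ ⟨v.1.1, hmem i v.1 v.2⟩ := by
          show G.Adj y v.1.1
          exact hyv
        exact (r1.reachable).trans r2.reachable
      · have hv : v.1 = xx := Subtype.ext hvx
        have hyB : y ∈ B' i := hymem i (hv ▸ v.2)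
        have r1 : (G.induce (B' i)).Adj ⟨u.1.1, hmem i u.1 u.2⟩ ⟨y, hyB⟩ := by
          show G.Adj u.1.1 y
          exact huy
        have r2 : (G.induce (B' i)).Adj ⟨y, hyB⟩ ⟨v.1.1, hmem i v.1 v.2⟩ := by
          show G.Adj y v.1.1
          exact hvx ▸ hxy.symm
        exact (r1.reachable).trans r2.reachable
  refine ⟨B', ?_, ?_, ?_, ?_⟩
  · intro i
    obtain ⟨a, ha⟩ := hne i
    exact ⟨a.1, hmem i a ha⟩
  · intro i j hij
    rw [Set.disjoint_left]
    intro v hvi hvj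
    rcases hmem' i v hvi with rfl | ⟨hv, hvB⟩
    · have h1 := (hxmem i hvi).1
      have h2 := (hxmem j hvj).1
      exact Set.disjoint_left.mp (hdisj hij) h1 h2
    · rcases hmem' j v hvj with hvy | ⟨hv', hvB'⟩
      · exact hv hvy
      · have : (⟨v, hv⟩ : {v : V // v ≠ y}) = ⟨v, hv'⟩ := rfl
        exact Set.disjoint_left.mp (hdisj hij) hvB (this ▸ hvB')
  · intro i
    rw [connected_iff]
    constructor
    · -- preconnected
      rintro ⟨v, hv⟩ ⟨w, hw⟩
      -- reduce both to elements of B i, possibly via y—x edge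
      have reachy : ∀ (hyi : y ∈ B' i),
          (G.induce (B' i)).Reachable ⟨y, hyi⟩ ⟨x, (hxmem i hyi).2⟩ := by
        intro hyi
        exact SimpleGraph.Adj.reachable (by show G.Adj y x; exact hxy.symm)
      have main : ∀ (v : V) (hv : v ∈ B' i), ∃ (a : ↥(B i)),
          (G.induce (B' i)).Reachable ⟨v, hv⟩ ⟨a.1.1, hmem i a.1 a.2⟩ := by
        intro v hv
        rcases hmem' i v hv with rfl | ⟨hvne, hvB⟩
        · refine ⟨⟨xx, (hxmem i hv).1⟩, ?_⟩
          exact reachy hv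
        · exact ⟨⟨⟨v, hvne⟩, hvB⟩, Reachable.refl _⟩
      obtain ⟨a, ra⟩ := main v hv
      obtain ⟨b, rb⟩ := main w hw
      have hab : ((contractG G x y).induce (B i)).Reachable a b := (hconn i) a b
      obtain ⟨p⟩ := hab
      exact (ra.trans (key i a b p)).trans rb.symm
    · obtain ⟨a, ha⟩ := hne i
      exact ⟨⟨a.1, hmem i a ha⟩⟩
  · intro i j hij
    obtain ⟨u, hu, v, hv, huv⟩ := hadj hij
    obtain ⟨hne', hcase⟩ := huv
    rcases hcase with hg | ⟨hux, hyv⟩ | ⟨hvx, huy⟩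
    · exact ⟨u.1, hmem i u hu, v.1, hmem j v hv, hg⟩
    · have hu' : u = xx := Subtype.ext hux
      exact ⟨y, hymem i (hu' ▸ hu), v.1, hmem j v hv, hyv⟩
    · have hv' : v = xx := Subtype.ext hvx
      exact ⟨u.1, hmem i u hu, y, hymem j (hv' ▸ hv), huy⟩

section Degrees
variable [Fintype V]

private lemma card_le_erase_add_one (s : Finset V) (y : V) :
    s.card ≤ (s.erase y).card + 1 := by
  by_cases h : y ∈ s
  · rw [Finset.card_erase_of_mem h]
    omega
  · rw [Finset.erase_eq_of_notMem h]
    omega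

/-- degree after deleting `y` drops by at most 1 -/
lemma degree_delete_ge (G : SimpleGraph V) {y : V} (a : ↥{v : V | v ≠ y}) :
    G.degree a.1 ≤ (G.induce {v : V | v ≠ y}).degree a + 1 := by
  classical
  have hsub : (G.neighborFinset a.1).erase y ⊆
      ((G.induce {v : V | v ≠ y}).neighborFinset a).image Subtype.val := by
    intro b hb
    rw [Finset.mem_erase, SimpleGraph.mem_neighborFinset] at hb
    refine Finset.mem_image.mpr ⟨⟨b, hb.1⟩, ?_, rfl⟩
    rw [SimpleGraph.mem_neighborFinset]
    exact hb.2
  have h1 := Finset.card_le_card hsub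
  rw [Finset.card_image_of_injective _ Subtype.val_injective] at h1
  have h2 := card_le_erase_add_one (G.neighborFinset a.1) y
  unfold SimpleGraph.degree
  omega

/-- degree after deleting a non-neighbour `y` does not drop -/
lemma degree_delete_eq (G : SimpleGraph V) {y : V} (a : ↥{v : V | v ≠ y})
    (hay : ¬ G.Adj y a.1) :
    G.degree a.1 ≤ (G.induce {v : V | v ≠ y}).degree a := by
  classical
  have hsub : G.neighborFinset a.1 ⊆
      ((G.induce {v : V | v ≠ y}).neighborFinset a).image Subtype.val := by
    intro b hb
    rw [SimpleGraph.mem_neighborFinset] at hb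
    have hby : b ≠ y := by
      rintro rfl
      exact hay hb.symm
    refine Finset.mem_image.mpr ⟨⟨b, hby⟩, ?_, rfl⟩
    rw [SimpleGraph.mem_neighborFinset]
    exact hb
  have h1 := Finset.card_le_card hsub
  rwa [Finset.card_image_of_injective _ Subtype.val_injective] at h1

/-- degree of a non-merged vertex after contraction drops by at most 1 -/
lemma degree_contract_ge (G : SimpleGraph V) {x y : V} (a : {v : V // v ≠ y}) :
    G.degree a.1 ≤ (contractG G x y).degree a + 1 := by
  classical
  have hsub : (G.neighborFinset a.1).erase y ⊆
      ((contractG G x y).neighborFinset a).image Subtype.val := by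
    intro b hb
    rw [Finset.mem_erase, SimpleGraph.mem_neighborFinset] at hb
    refine Finset.mem_image.mpr ⟨⟨b, hb.1⟩, ?_, rfl⟩
    rw [SimpleGraph.mem_neighborFinset]
    exact ⟨fun h => (G.ne_of_adj hb.2) (congrArg Subtype.val h), Or.inl hb.2⟩
  have h1 := Finset.card_le_card hsub
  rw [Finset.card_image_of_injective _ Subtype.val_injective] at h1
  have h2 := card_le_erase_add_one (G.neighborFinset a.1) y
  unfold SimpleGraph.degree
  omega

/-- degree of a vertex which is not a common neighbour of `x,y` is preserved -/
lemma degree_contract_eq (G : SimpleGraph V) {x y : V} (a : {v : V // v ≠ y})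
    (hax : a.1 ≠ x) (hcom : ¬ (G.Adj x a.1 ∧ G.Adj y a.1)) :
    G.degree a.1 ≤ (contractG G x y).degree a := by
  classical
  by_cases hay : G.Adj y a.1
  · -- then a is not adjacent to x; neighbours: erase y, add x
    have haxadj : ¬ G.Adj x a.1 := fun h => hcom ⟨h, hay⟩
    have hxy : x ≠ y := by
      rintro rfl
      exact haxadj hay
    have hsub : insert x ((G.neighborFinset a.1).erase y) ⊆
        ((contractG G x y).neighborFinset a).image Subtype.val := by
      intro b hb
      rw [Finset.mem_insert] at hb
      rcases hb with rfl | hb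
      · refine Finset.mem_image.mpr ⟨⟨b, hxy⟩, ?_, rfl⟩
        rw [SimpleGraph.mem_neighborFinset]
        exact ⟨fun h => hax (congrArg Subtype.val h), Or.inr (Or.inr ⟨rfl, hay.symm⟩)⟩
      · rw [Finset.mem_erase, SimpleGraph.mem_neighborFinset] at hb
        refine Finset.mem_image.mpr ⟨⟨b, hb.1⟩, ?_, rfl⟩
        rw [SimpleGraph.mem_neighborFinset]
        exact ⟨fun h => (G.ne_of_adj hb.2) (congrArg Subtype.val h), Or.inl hb.2⟩
    have h1 := Finset.card_le_card hsub
    rw [Finset.card_image_of_injective _ Subtype.val_injective] at h1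
    have hxnot : x ∉ (G.neighborFinset a.1).erase y := by
      rw [Finset.mem_erase, SimpleGraph.mem_neighborFinset]
      intro h
      exact haxadj h.2.symm
    rw [Finset.card_insert_of_notMem hxnot] at h1
    have hymem : y ∈ G.neighborFinset a.1 := by
      rw [SimpleGraph.mem_neighborFinset]; exact hay.symm
    rw [Finset.card_erase_of_mem hymem] at h1
    unfold SimpleGraph.degree
    have hpos : 0 < (G.neighborFinset a.1).card := Finset.card_pos.mpr ⟨y, hymem⟩
    omega
  · -- y not a neighbour of a: neighbours preserved
    have hsub : G.neighborFinset a.1 ⊆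
        ((contractG G x y).neighborFinset a).image Subtype.val := by
      intro b hb
      rw [SimpleGraph.mem_neighborFinset] at hb
      have hby : b ≠ y := by
        rintro rfl
        exact hay hb.symm
      refine Finset.mem_image.mpr ⟨⟨b, hby⟩, ?_, rfl⟩
      rw [SimpleGraph.mem_neighborFinset]
      exact ⟨fun h => (G.ne_of_adj hb) (congrArg Subtype.val h), Or.inl hb⟩
    have h1 := Finset.card_le_card hsub
    rwa [Finset.card_image_of_injective _ Subtype.val_injective] at h1

/-- degree of the merged vertex -/
lemma degree_contract_merged (G : SimpleGraph V) {x y : V} (hxy : G.Adj x y) :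
    G.degree x + G.degree y ≤
      (contractG G x y).degree ⟨x, hxy.ne⟩ + 2 +
        ((G.neighborFinset x) ∩ (G.neighborFinset y)).card := by
  classical
  have hsub : ((G.neighborFinset x ∪ G.neighborFinset y).erase y).erase x ⊆
      ((contractG G x y).neighborFinset ⟨x, hxy.ne⟩).image Subtype.val := by
    intro b hb
    rw [Finset.mem_erase] at hb
    obtain ⟨hbx, hb⟩ := hb
    rw [Finset.mem_erase] at hb
    obtain ⟨hby, hb⟩ := hb
    rw [Finset.mem_union] at hb
    refine Finset.mem_image.mpr ⟨⟨b, hby⟩, ?_, rfl⟩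
    rw [SimpleGraph.mem_neighborFinset]
    rcases hb with hb | hb
    · rw [SimpleGraph.mem_neighborFinset] at hb
      exact ⟨fun h => hbx (congrArg Subtype.val h).symm, Or.inl hb⟩
    · rw [SimpleGraph.mem_neighborFinset] at hb
      exact ⟨fun h => hbx (congrArg Subtype.val h).symm, Or.inr (Or.inl ⟨rfl, hb⟩)⟩
  have h1 := Finset.card_le_card hsub
  rw [Finset.card_image_of_injective _ Subtype.val_injective] at h1
  have h2 := card_le_erase_add_one ((G.neighborFinset x ∪ G.neighborFinset y).erase y) x
  have h3 := card_le_erase_add_one (G.neighborFinset x ∪ G.neighborFinset y) y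
  have h4 := Finset.card_union_add_card_inter (G.neighborFinset x) (G.neighborFinset y)
  unfold SimpleGraph.degree
  omega

/-- common neighbours give a degree lower bound in the induced neighbourhood -/
lemma degree_induce_neighborSet (G : SimpleGraph V) {v : V} (u : ↥(G.neighborSet v)) :
    ((G.neighborFinset u.1) ∩ (G.neighborFinset v)).card ≤
      (G.induce (G.neighborSet v)).degree u := by
  classical
  have hsub : (G.neighborFinset u.1) ∩ (G.neighborFinset v) ⊆
      ((G.induce (G.neighborSet v)).neighborFinset u).image Subtype.val := by
    intro b hb
    rw [Finset.mem_inter, SimpleGraph.mem_neighborFinset, SimpleGraph.mem_neighborFinset] at hb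
    refine Finset.mem_image.mpr ⟨⟨b, hb.2⟩, ?_, rfl⟩
    rw [SimpleGraph.mem_neighborFinset]
    exact hb.1
  have h1 := Finset.card_le_card hsub
  rwa [Finset.card_image_of_injective _ Subtype.val_injective] at h1

end Degrees

section EdgeCounts
variable [Fintype V]

/-- edge count after deleting a vertex -/
lemma card_edge_delete (G : SimpleGraph V) (y : V) :
    G.edgeFinset.card ≤ (G.induce {v : V | v ≠ y}).edgeFinset.card + G.degree y := by
  classical
  set bad : Finset (Sym2 V) := (G.neighborFinset y).image (fun z => s(y, z)) with hbad
  have hbadcard : bad.card ≤ G.degree y := by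
    calc bad.card ≤ (G.neighborFinset y).card := Finset.card_image_le
    _ = G.degree y := rfl
  have hclass : ∀ a b : V, s(a, b) ∈ G.edgeFinset \ bad → a ≠ y ∧ b ≠ y := by
    intro a b he
    rw [Finset.mem_sdiff, SimpleGraph.mem_edgeFinset, SimpleGraph.mem_edgeSet] at he
    obtain ⟨hadj, hnb⟩ := he
    constructor
    · intro h
      refine hnb (Finset.mem_image.mpr ⟨b, ?_, ?_⟩)
      · rw [SimpleGraph.mem_neighborFinset]
        exact h ▸ hadj
      · rw [h]
    · intro h
      refine hnb (Finset.mem_image.mpr ⟨a, ?_, ?_⟩)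
      · rw [SimpleGraph.mem_neighborFinset]
        exact h ▸ hadj.symm
      · rw [h]
        exact Sym2.eq_swap
  by_cases hV : ∃ x : V, x ≠ y
  · obtain ⟨x, hx⟩ := hV
    set g : V → ↥{v : V | v ≠ y} := fun v => if h : v = y then ⟨x, hx⟩ else ⟨v, h⟩ with hg
    have hmap : ∀ e ∈ G.edgeFinset \ bad,
        (Sym2.map g e) ∈ (G.induce {v : V | v ≠ y}).edgeFinset := by
      intro e he
      induction e with
      | _ a b =>
        obtain ⟨hay, hby⟩ := hclass a b he
        have hadj : G.Adj a b := by
          have := (Finset.mem_sdiff.mp he).1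
          rwa [SimpleGraph.mem_edgeFinset, SimpleGraph.mem_edgeSet] at this
        rw [SimpleGraph.mem_edgeFinset, Sym2.map_pair_eq, SimpleGraph.mem_edgeSet]
        show (G.induce {v : V | v ≠ y}).Adj (g a) (g b)
        rw [hg]
        simp only [dif_neg hay, dif_neg hby]
        exact hadj
    have hinj : Set.InjOn (Sym2.map g) ↑(G.edgeFinset \ bad) := by
      intro e1 h1 e2 h2 heq
      have hid : ∀ e ∈ G.edgeFinset \ bad, Sym2.map Subtype.val (Sym2.map g e) = e := by
        intro e he
        induction e with
        | _ a b =>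
          obtain ⟨hay, hby⟩ := hclass a b he
          rw [Sym2.map_pair_eq, Sym2.map_pair_eq, hg]
          simp only [dif_neg hay, dif_neg hby]
      rw [← hid e1 h1, ← hid e2 h2, heq]
    have h1 := Finset.card_le_card_of_injOn _ hmap hinj
    have h2 : G.edgeFinset.card ≤ (G.edgeFinset \ bad).card + bad.card :=
      Finset.card_le_card_sdiff_add_card
    omega
  · push_neg at hV
    have hempty : G.edgeFinset = ∅ := by
      rw [Finset.eq_empty_iff_forall_notMem]
      intro e he
      induction e with
      | _ a b =>
        rw [SimpleGraph.mem_edgeFinset, SimpleGraph.mem_edgeSet] at he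
        exact he.ne ((hV a).trans (hV b).symm)
    simp [hempty]

/-- edge count after contracting an edge -/
lemma card_edge_contract (G : SimpleGraph V) {x y : V} (hxy : G.Adj x y) :
    G.edgeFinset.card ≤ (contractG G x y).edgeFinset.card + 1 +
      ((G.neighborFinset x) ∩ (G.neighborFinset y)).card := by
  classical
  set bad : Finset (Sym2 V) :=
    insert s(x, y) (((G.neighborFinset x) ∩ (G.neighborFinset y)).image (fun z => s(y, z)))
    with hbad
  have hbadcard : bad.card ≤ 1 + ((G.neighborFinset x) ∩ (G.neighborFinset y)).card := by
    calc bad.card ≤ _ + 1 := Finset.card_insert_le _ _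
    _ ≤ ((G.neighborFinset x) ∩ (G.neighborFinset y)).card + 1 :=
      Nat.add_le_add_right Finset.card_image_le 1
    _ = _ := Nat.add_comm _ _
  set g : V → {v : V // v ≠ y} := fun v => if h : v = y then ⟨x, hxy.ne⟩ else ⟨v, h⟩ with hg
  set g' : V → V := fun v => if v = y then x else v with hg'
  have hclass : ∀ a b : V, s(a, b) ∈ G.edgeFinset \ bad →
      (a ≠ y ∧ b ≠ y) ∨ (a = y ∧ b ≠ y ∧ b ≠ x ∧ ¬ G.Adj x b) ∨
      (b = y ∧ a ≠ y ∧ a ≠ x ∧ ¬ G.Adj x a) := by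
    intro a b he
    rw [Finset.mem_sdiff, SimpleGraph.mem_edgeFinset, SimpleGraph.mem_edgeSet] at he
    obtain ⟨hadj, hnb⟩ := he
    by_cases hay : a = y
    · have hby : b ≠ y := fun h => hadj.ne (hay.trans h.symm)
      have hbx : b ≠ x := by
        intro h
        apply hnb
        rw [hay, h]
        exact Finset.mem_insert.mpr (Or.inl Sym2.eq_swap)
      have hnadj : ¬ G.Adj x b := by
        intro hxb
        apply hnb
        rw [hay]
        refine Finset.mem_insert.mpr (Or.inr (Finset.mem_image.mpr ⟨b, ?_, rfl⟩))
        rw [Finset.mem_inter, SimpleGraph.mem_neighborFinset, SimpleGraph.mem_neighborFinset]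
        exact ⟨hxb, hay ▸ hadj⟩
      exact Or.inr (Or.inl ⟨hay, hby, hbx, hnadj⟩)
    · by_cases hby : b = y
      · have hax : a ≠ x := by
          intro h
          apply hnb
          rw [hby, h]
          exact Finset.mem_insert.mpr (Or.inl rfl)
        have hnadj : ¬ G.Adj x a := by
          intro hxa
          apply hnb
          rw [hby]
          refine Finset.mem_insert.mpr (Or.inr (Finset.mem_image.mpr ⟨a, ?_, Sym2.eq_swap⟩))
          rw [Finset.mem_inter, SimpleGraph.mem_neighborFinset, SimpleGraph.mem_neighborFinset]
          exact ⟨hxa, hby ▸ hadj.symm⟩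
        exact Or.inr (Or.inr ⟨hby, hay, hax, hnadj⟩)
      · exact Or.inl ⟨hay, hby⟩
  have hmap : ∀ e ∈ G.edgeFinset \ bad,
      (Sym2.map g e) ∈ (contractG G x y).edgeFinset := by
    intro e he
    induction e with
    | _ a b =>
      have hadj : G.Adj a b := by
        have := (Finset.mem_sdiff.mp he).1
        rwa [SimpleGraph.mem_edgeFinset, SimpleGraph.mem_edgeSet] at this
      rw [SimpleGraph.mem_edgeFinset, Sym2.map_pair_eq, SimpleGraph.mem_edgeSet]
      rcases hclass a b he with ⟨hay, hby⟩ | ⟨hay, hby, hbx, hnadj⟩ | ⟨hby, hay2, hax2, hnadj⟩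
      · show (contractG G x y).Adj (g a) (g b)
        rw [hg]
        simp only [dif_neg hay, dif_neg hby]
        exact ⟨fun h => hadj.ne (congrArg Subtype.val h), Or.inl hadj⟩
      · show (contractG G x y).Adj (g a) (g b)
        rw [hg]
        simp only [dif_pos hay, dif_neg hby]
        exact ⟨fun h => hbx (congrArg Subtype.val h).symm, Or.inr (Or.inl ⟨rfl, hay ▸ hadj⟩)⟩
      · show (contractG G x y).Adj (g a) (g b)
        rw [hg]
        simp only [dif_pos hby, dif_neg hay2]
        exact ⟨fun h => hax2 (congrArg Subtype.val h), Or.inr (Or.inr ⟨rfl, hby ▸ hadj⟩)⟩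
  have hcomp : ∀ e : Sym2 V, Sym2.map Subtype.val (Sym2.map g e) = Sym2.map g' e := by
    intro e
    induction e with
    | _ a b =>
      rw [Sym2.map_pair_eq, Sym2.map_pair_eq, Sym2.map_pair_eq]
      have hv : ∀ c : V, (g c : V) = g' c := by
        intro c
        rw [hg, hg']
        by_cases h : c = y
        · simp [h]
        · simp [h]
      rw [hv a, hv b]
  have hdesc : ∀ e ∈ G.edgeFinset \ bad,
      (Sym2.map g' e = e) ∨
      (∃ b, e = s(y, b) ∧ b ≠ x ∧ ¬ G.Adj x b ∧ Sym2.map g' e = s(x, b)) := by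
    intro e he
    induction e with
    | _ a b =>
      rcases hclass a b he with ⟨hay, hby⟩ | ⟨hay, hby, hbx, hnadj⟩ | ⟨hby, hay2, hax2, hnadj⟩
      · left
        rw [Sym2.map_pair_eq, hg']
        simp only [if_neg hay, if_neg hby]
      · right
        refine ⟨b, by rw [hay], hbx, hnadj, ?_⟩
        rw [Sym2.map_pair_eq, hg']
        simp only [if_pos hay, if_neg hby]
      · right
        refine ⟨a, by rw [hby]; exact Sym2.eq_swap, hax2, hnadj, ?_⟩
        rw [Sym2.map_pair_eq, hg']
        simp only [if_pos hby, if_neg hay2]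
        exact Sym2.eq_swap
  have hinj' : Set.InjOn (Sym2.map g') ↑(G.edgeFinset \ bad) := by
    intro e1 h1 e2 h2 heq
    have hmem1 : e1 ∈ G.edgeSet := by
      have := (Finset.mem_sdiff.mp h1).1
      rwa [SimpleGraph.mem_edgeFinset] at this
    have hmem2 : e2 ∈ G.edgeSet := by
      have := (Finset.mem_sdiff.mp h2).1
      rwa [SimpleGraph.mem_edgeFinset] at this
    rcases hdesc e1 h1 with hd1 | ⟨b1, he1, hb1x, hn1, hm1⟩ <;>
      rcases hdesc e2 h2 with hd2 | ⟨b2, he2, hb2x, hn2, hm2⟩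
    · rw [← hd1, ← hd2, heq]
    · exfalso
      have hx2 : e1 = s(x, b2) := by rw [← hd1, heq, hm2]
      rw [hx2, SimpleGraph.mem_edgeSet] at hmem1
      exact hn2 hmem1
    · exfalso
      have hx1 : e2 = s(x, b1) := by rw [← hd2, ← heq, hm1]
      rw [hx1, SimpleGraph.mem_edgeSet] at hmem2
      exact hn1 hmem2
    · rw [hm1, hm2] at heq
      rw [Sym2.eq_iff] at heq
      rcases heq with ⟨-, rfl⟩ | ⟨hxb2, hb1⟩
      · rw [he1, he2]
      · exact absurd hb1 hb1x
  have hinj : Set.InjOn (Sym2.map g) ↑(G.edgeFinset \ bad) := by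
    intro e1 h1 e2 h2 heq
    refine hinj' h1 h2 ?_
    rw [← hcomp, ← hcomp, heq]
  have h1 := Finset.card_le_card_of_injOn _ hmap hinj
  have h2 : G.edgeFinset.card ≤ (G.edgeFinset \ bad).card + bad.card :=
    Finset.card_le_card_sdiff_add_card
  omega

end EdgeCounts

section Cycles

/-- a finite graph with minimum degree 2 contains a cycle -/
lemma exists_cycle_of_min_degree_two {W : Type*} [Fintype W] (H : SimpleGraph W)
    (hne : Nonempty W) (hdeg : ∀ w : W, 2 ≤ H.degree w) :
    ∃ (u : W) (c : H.Walk u u), c.IsCycle := by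
  classical
  set L : Set ℕ := {n | ∃ (u v : W) (p : H.Walk u v), p.IsPath ∧ p.length = n} with hL
  have hLne : L.Nonempty := by
    obtain ⟨w⟩ := hne
    exact ⟨0, w, w, Walk.nil, Walk.IsPath.nil, rfl⟩
  have hLbdd : BddAbove L := by
    refine ⟨Fintype.card W, ?_⟩
    rintro n ⟨u, v, p, hp, rfl⟩
    exact le_of_lt hp.length_lt
  obtain ⟨u, v, p, hp, hplen⟩ := Nat.sSup_mem hLne hLbdd
  have hmax : ∀ (a b : W) (q : H.Walk a b), q.IsPath → q.length ≤ sSup L := by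
    intro a b q hq
    exact le_csSup hLbdd ⟨a, b, q, hq, rfl⟩
  cases p with
  | nil =>
    exfalso
    have h2 : 2 ≤ (H.neighborFinset u).card := hdeg u
    obtain ⟨z, hz⟩ := Finset.card_pos.mp (by omega : 0 < (H.neighborFinset u).card)
    rw [SimpleGraph.mem_neighborFinset] at hz
    have hzu : z ≠ u := fun hh => H.irrefl (hh ▸ hz)
    have hpath : (Walk.cons hz.symm Walk.nil : H.Walk z u).IsPath := by
      rw [Walk.cons_isPath_iff]
      refine ⟨Walk.IsPath.nil, ?_⟩
      rw [Walk.support_nil]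
      simpa using hzu
    have hle := hmax z u _ hpath
    rw [Walk.length_cons, Walk.length_nil] at hle
    rw [Walk.length_nil] at hplen
    omega
  | @cons _ s _ h q =>
    have h2 : 1 < (H.neighborFinset u).card := hdeg u
    have hs : s ∈ H.neighborFinset u := by rwa [SimpleGraph.mem_neighborFinset]
    obtain ⟨z, hz, hzs⟩ := Finset.exists_mem_ne h2 s
    rw [SimpleGraph.mem_neighborFinset] at hz
    have hzu : z ≠ u := fun hh => H.irrefl (hh ▸ hz)
    by_cases hzsup : z ∈ (Walk.cons h q).support
    · have hq' : ((Walk.cons h q).takeUntil z hzsup).IsPath := hp.takeUntil hzsup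
      have hne2 : s(z, u) ∉ ((Walk.cons h q).takeUntil z hzsup).edges := by
        intro hmem
        have hmem' : s(z, u) ∈ (Walk.cons h q).edges :=
          Walk.edges_takeUntil_subset _ hzsup hmem
        rw [Walk.edges_cons] at hmem'
        rcases List.mem_cons.mp hmem' with heq | hmem''
        · rw [Sym2.eq_iff] at heq
          rcases heq with ⟨rfl, -⟩ | ⟨h1, h2'⟩
          · exact hzu rfl
          · exact hzs h1
        · have hus : u ∈ q.support := Walk.snd_mem_support_of_mem_edges q hmem''
          exact ((Walk.cons_isPath_iff _ _).mp hp).2 hus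
      exact ⟨z, Walk.cons hz.symm ((Walk.cons h q).takeUntil z hzsup),
        (Walk.cons_isCycle_iff _ _).mpr ⟨hq', hne2⟩⟩
    · exfalso
      have hpath : (Walk.cons hz.symm (Walk.cons h q)).IsPath := by
        rw [Walk.cons_isPath_iff]
        exact ⟨hp, hzsup⟩
      have hle := hmax z v _ hpath
      rw [Walk.length_cons] at hle
      omega

/-- three branch sets obtained from a cycle -/
lemma cycle_three_sets {G : SimpleGraph V} {u : V} (c : G.Walk u u) (hc : c.IsCycle) :
    ∃ S : Fin 3 → Set V,
      (∀ i, (S i).Nonempty) ∧ (Pairwise fun i j => Disjoint (S i) (S j)) ∧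
      (∀ i, (G.induce (S i)).Connected) ∧
      (Pairwise fun i j => ∃ a ∈ S i, ∃ b ∈ S j, G.Adj a b) ∧
      (∀ i, S i ⊆ {x | x ∈ c.support}) := by
  classical
  have hlen := hc.three_le_length
  cases c with
  | nil => simp at hlen
  | @cons _ a _ h q =>
    have hq : q.IsPath := ((Walk.cons_isCycle_iff q h).mp hc).1
    have hqlen : 2 ≤ q.length := by
      rw [Walk.length_cons] at hlen
      omega
    obtain ⟨b, h2, r, hqr⟩ := Walk.exists_eq_cons_of_ne (show u ≠ a from h.ne) q.reverse
    have hqrevpath : (Walk.cons h2 r).IsPath := hqr ▸ hq.reverse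
    have hrpath : r.IsPath := ((Walk.cons_isPath_iff _ _).mp hqrevpath).1
    have hur : u ∉ r.support := ((Walk.cons_isPath_iff _ _).mp hqrevpath).2
    have hrlen : 1 ≤ r.length := by
      have hh := congrArg Walk.length hqr
      rw [Walk.length_reverse, Walk.length_cons] at hh
      omega
    have hab : a ≠ b := by
      intro hh
      subst hh
      have : r = Walk.nil := Walk.isPath_iff_eq_nil.mp hrpath
      rw [this] at hrlen
      simp at hrlen
    obtain ⟨c2, h3, r2, hrr⟩ := Walk.exists_eq_cons_of_ne hab r.reverse
    have hrrevpath : (Walk.cons h3 r2).IsPath := hrr ▸ hrpath.reverse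
    have har2 : a ∉ r2.support := ((Walk.cons_isPath_iff _ _).mp hrrevpath).2
    have hmemr : ∀ x ∈ r2.support, x ∈ r.support := by
      intro x hx
      have hx1 : x ∈ r.reverse.support := by
        rw [hrr, Walk.support_cons]
        exact List.mem_cons_of_mem _ hx
      rwa [Walk.support_reverse, List.mem_reverse] at hx1
    have hur2 : u ∉ r2.support := fun hu => hur (hmemr u hu)
    have hbmem : b ∈ r2.support := by
      have hb1 : b ∈ (Walk.cons h3 r2).support := by
        rw [← hrr, Walk.support_reverse, List.mem_reverse]
        exact Walk.start_mem_support r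
      rw [Walk.support_cons] at hb1
      rcases List.mem_cons.mp hb1 with hba | hb2
      · exact absurd hba.symm hab
      · exact hb2
    have hc2mem : c2 ∈ r2.support := Walk.start_mem_support r2
    have hua : u ≠ a := h.ne
    have hadjub : G.Adj u b := h2
    have hadjac2 : G.Adj a c2 := h3
    refine ⟨![{u}, {a}, {x | x ∈ r2.support}], ?_, ?_, ?_, ?_, ?_⟩
    · intro i
      fin_cases i
      · exact ⟨u, rfl⟩
      · exact ⟨a, rfl⟩
      · exact ⟨c2, hc2mem⟩
    · intro i j hij
      have d01 : Disjoint ({u} : Set V) {a} := by simp [Set.disjoint_left, hua]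
      have d02 : Disjoint ({u} : Set V) {x | x ∈ r2.support} := by
        rw [Set.disjoint_left]; rintro x rfl; exact hur2
      have d12 : Disjoint ({a} : Set V) {x | x ∈ r2.support} := by
        rw [Set.disjoint_left]; rintro x rfl; exact har2
      fin_cases i <;> fin_cases j <;>
        first
        | exact absurd rfl hij
        | exact d01
        | exact d01.symm
        | exact d02
        | exact d02.symm
        | exact d12
        | exact d12.symm
    · intro i
      fin_cases i
      · exact singleton_connected G u
      · exact singleton_connected G a
      · exact r2.connected_induce_support
    · intro i j hij
      fin_cases i <;> fin_cases j <;>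
        first
        | exact absurd rfl hij
        | exact ⟨u, rfl, a, rfl, h⟩
        | exact ⟨a, rfl, u, rfl, h.symm⟩
        | exact ⟨u, rfl, b, hbmem, hadjub⟩
        | exact ⟨b, hbmem, u, rfl, hadjub.symm⟩
        | exact ⟨a, rfl, c2, hc2mem, hadjac2⟩
        | exact ⟨c2, hc2mem, a, rfl, hadjac2.symm⟩
    · have hsub : ∀ x ∈ r2.support, x ∈ (Walk.cons h q).support := by
        intro x hx
        have hxr : x ∈ r.support := hmemr x hx
        have hxq : x ∈ q.support := by
          have hx1 : x ∈ q.reverse.support := by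
            rw [hqr, Walk.support_cons]
            exact List.mem_cons_of_mem _ hxr
          rwa [Walk.support_reverse, List.mem_reverse] at hx1
        rw [Walk.support_cons]
        exact List.mem_cons_of_mem _ hxq
      intro i
      fin_cases i
      · intro x hx
        simp only [Matrix.cons_val_zero, Set.mem_singleton_iff] at hx
        subst hx
        exact Walk.start_mem_support _
      · intro x hx
        simp only [Matrix.cons_val_one, Matrix.head_cons, Set.mem_singleton_iff] at hx
        subst hx
        rw [Walk.support_cons]
        exact List.mem_cons_of_mem _ (Walk.start_mem_support q)
      · intro x hx
        exact hsub x hx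

end Cycles

section LowHelpers
variable [Fintype V]

lemma low_single_helper (H : SimpleGraph V) (a : V)
    (hsub : ∀ v, H.degree v ≤ 2 → v = a) :
    (Finset.univ.filter (fun v => H.degree v ≤ 2)).card ≤ 1 := by
  classical
  rw [Finset.card_le_one]
  intro x hx y hy
  rw [Finset.mem_filter] at hx hy
  rw [hsub x hx.2, hsub y hy.2]

lemma low_pair_helper (H : SimpleGraph V) (a b : V) (hadj : H.Adj a b)
    (hsub : ∀ v, H.degree v ≤ 2 → v = a ∨ v = b) :
    ((Finset.univ.filter (fun v => H.degree v ≤ 2)).card ≤ 1 ∨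
      ∃ x y : V, H.Adj x y ∧ Finset.univ.filter (fun v => H.degree v ≤ 2) = {x, y}) := by
  classical
  by_cases hc : H.degree a ≤ 2 ∧ H.degree b ≤ 2
  · right
    refine ⟨a, b, hadj, ?_⟩
    ext v
    rw [Finset.mem_filter, Finset.mem_insert, Finset.mem_singleton]
    constructor
    · intro hv
      exact hsub v hv.2
    · rintro (rfl | rfl)
      · exact ⟨Finset.mem_univ _, hc.1⟩
      · exact ⟨Finset.mem_univ _, hc.2⟩
  · left
    rw [Finset.card_le_one]
    intro x hx y hy
    rw [Finset.mem_filter] at hx hy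
    rcases Decidable.not_and_iff_or_not.mp hc with hna | hnb
    · have hx' : x = b := (hsub x hx.2).resolve_left (by rintro rfl; exact hna hx.2)
      have hy' : y = b := (hsub y hy.2).resolve_left (by rintro rfl; exact hna hy.2)
      rw [hx', hy']
    · have hx' : x = a := (hsub x hx.2).resolve_right (by rintro rfl; exact hnb hx.2)
      have hy' : y = a := (hsub y hy.2).resolve_right (by rintro rfl; exact hnb hy.2)
      rw [hx', hy']

lemma exists_outside (s : Finset V) (hcard : s.card < Fintype.card V) :
    ∃ v : V, v ∉ s := by
  have hns : ¬ (Finset.univ : Finset V) ⊆ s := by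
    intro hsub2
    have := Finset.card_le_card hsub2
    rw [Finset.card_univ] at this
    omega
  obtain ⟨v, -, hv⟩ := Finset.not_subset.mp hns
  exact ⟨v, hv⟩

lemma exists_third (G : SimpleGraph V) (u p : V) (h : ∃ v, 3 ≤ G.degree v) :
    ∃ v : V, v ≠ u ∧ v ≠ p := by
  classical
  obtain ⟨v0, hv0⟩ := h
  have hcard : 4 ≤ Fintype.card V := by
    have := G.degree_lt_card_verts v0
    omega
  have h2 : ({u, p} : Finset V).card < Fintype.card V := by
    have : ({u, p} : Finset V).card ≤ 2 := (Finset.card_insert_le _ _).trans (by simp)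
    omega
  obtain ⟨v, hv⟩ := exists_outside _ h2
  rw [Finset.mem_insert, Finset.mem_singleton] at hv
  push_neg at hv
  exact ⟨v, hv⟩

lemma exists_fourth (G : SimpleGraph V) (u p q : V) (h : ∃ v, 3 ≤ G.degree v) :
    ∃ v : V, v ≠ u ∧ v ≠ p ∧ v ≠ q := by
  classical
  obtain ⟨v0, hv0⟩ := h
  have hcard : 4 ≤ Fintype.card V := by
    have := G.degree_lt_card_verts v0
    omega
  have h2 : ({u, p, q} : Finset V).card < Fintype.card V := by
    have h3 : ({u, p, q} : Finset V).card ≤ 3 := by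
      apply (Finset.card_insert_le _ _).trans
      have h4 : ({p, q} : Finset V).card ≤ 2 := (Finset.card_insert_le _ _).trans (by simp)
      omega
    omega
  obtain ⟨v, hv⟩ := exists_outside _ h2
  rw [Finset.mem_insert, Finset.mem_insert, Finset.mem_singleton] at hv
  push_neg at hv
  exact ⟨v, hv.1, hv.2.1, hv.2.2⟩

end LowHelpers

/-- Main K₄ lemma: a graph with at most one low-degree vertex (or two adjacent ones)
and some vertex of degree ≥ 3 has a `K₄` minor. -/
theorem kminor_four : ∀ (n : ℕ) {V : Type*} [Fintype V] (G : SimpleGraph V),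
    Fintype.card V = n →
    ((Finset.univ.filter (fun v => G.degree v ≤ 2)).card ≤ 1 ∨
      (∃ a b : V, G.Adj a b ∧ Finset.univ.filter (fun v => G.degree v ≤ 2) = {a, b})) →
    (∃ v : V, 3 ≤ G.degree v) →
    KMinor G 4 := by
  intro n
  induction n using Nat.strong_induction_on with
  | _ n IH =>
  intro V _ G hcard hlow hdeg3
  classical
  by_cases hLowEx : ∃ u : V, G.degree u ≤ 2
  · -- there is a low vertex u
    obtain ⟨u, hu⟩ := hLowEx
    have huL : u ∈ Finset.univ.filter (fun v => G.degree v ≤ 2) := by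
      rw [Finset.mem_filter]
      exact ⟨Finset.mem_univ _, hu⟩
    -- extract the "partner" p
    obtain ⟨p, hp1, hp2⟩ : ∃ p : V, (∀ v, G.degree v ≤ 2 → v = u ∨ v = p) ∧
        (p ≠ u → G.Adj u p) := by
      rcases hlow with hcard1 | ⟨a, b, hab, hLab⟩
      · refine ⟨u, fun v hv => Or.inl ?_, fun h => absurd rfl h⟩
        refine Finset.card_le_one.mp hcard1 v ?_ u huL
        rw [Finset.mem_filter]
        exact ⟨Finset.mem_univ _, hv⟩
      · have humem : u = a ∨ u = b := by
          have := huL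
          rw [hLab, Finset.mem_insert, Finset.mem_singleton] at this
          exact this
        rcases humem with rfl | rfl
        · refine ⟨b, fun v hv => ?_, fun _ => hab⟩
          have : v ∈ ({u, b} : Finset V) := by
            rw [← hLab, Finset.mem_filter]
            exact ⟨Finset.mem_univ _, hv⟩
          rwa [Finset.mem_insert, Finset.mem_singleton] at this
        · refine ⟨a, fun v hv => ?_, fun _ => hab.symm⟩
          have : v ∈ ({a, u} : Finset V) := by
            rw [← hLab, Finset.mem_filter]
            exact ⟨Finset.mem_univ _, hv⟩
          rw [Finset.mem_insert, Finset.mem_singleton] at this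
          tauto
    have hdu : G.degree u = 0 ∨ G.degree u = 1 ∨ G.degree u = 2 := by omega
    rcases hdu with hdu | hdu | hdu
    · -- degree 0 : delete u
      have hnadj : ∀ z, ¬ G.Adj u z := by
        intro z hz
        have hzmem : z ∈ G.neighborFinset u := by rwa [SimpleGraph.mem_neighborFinset]
        have : 0 < G.degree u := Finset.card_pos.mpr ⟨z, hzmem⟩
        omega
      set G' := G.induce {v : V | v ≠ u} with hG'
      have hdeg' : ∀ a : ↥{v : V | v ≠ u}, G.degree a.1 ≤ G'.degree a :=
        fun a => degree_delete_eq G a (fun h => hnadj a.1 h)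
      have hlow' : (Finset.univ.filter (fun v => G'.degree v ≤ 2)).card ≤ 1 := by
        rw [Finset.card_le_one]
        intro a ha b hb
        exfalso
        rw [Finset.mem_filter] at ha
        have hlowa : G.degree a.1 ≤ 2 := le_trans (hdeg' a) ha.2
        rcases hp1 a.1 hlowa with h | h
        · exact a.2 h
        · by_cases hpu : p = u
          · exact a.2 (h.trans hpu)
          · have := hp2 hpu
            have := hnadj p this
            exact this
      have hdeg3' : ∃ v : ↥{v : V | v ≠ u}, 3 ≤ G'.degree v := by
        obtain ⟨v0, hv0⟩ := hdeg3
        have hvu : v0 ≠ u := by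
          rintro rfl
          omega
        exact ⟨⟨v0, hvu⟩, le_trans hv0 (hdeg' ⟨v0, hvu⟩)⟩
      have hlt : Fintype.card ↥{v : V | v ≠ u} < n := by
        rw [← hcard]
        exact Fintype.card_subtype_lt (p := fun v => v ∈ {v : V | v ≠ u}) (x := u) (by simp)
      exact kminor_of_kminor_induce (IH _ hlt G' rfl (Or.inl hlow') hdeg3')
    · -- degree 1 : delete u
      obtain ⟨w, hw⟩ := Finset.card_eq_one.mp hdu
      have hadjuw : G.Adj u w := by
        rw [← SimpleGraph.mem_neighborFinset, hw]
        exact Finset.mem_singleton_self w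
      have hnbr : ∀ z, G.Adj u z → z = w := by
        intro z hz
        have : z ∈ ({w} : Finset V) := by
          rw [← hw, SimpleGraph.mem_neighborFinset]
          exact hz
        simpa using this
      have hwu : w ≠ u := hadjuw.ne'
      have hp3 : ∀ v, G.degree v ≤ 2 → v = u ∨ v = w := by
        intro v hv
        rcases hp1 v hv with h | h
        · exact Or.inl h
        · by_cases hpu : p = u
          · exact Or.inl (h.trans hpu)
          · exact Or.inr (h.trans (hnbr p (hp2 hpu)))
      set G' := G.induce {v : V | v ≠ u} with hG'
      have hdeg' : ∀ a : ↥{v : V | v ≠ u}, a.1 ≠ w → G.degree a.1 ≤ G'.degree a := by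
        intro a haw
        refine degree_delete_eq G a (fun h => ?_)
        exact haw (hnbr a.1 h)
      have hlow' : (Finset.univ.filter (fun v => G'.degree v ≤ 2)).card ≤ 1 := by
        refine low_single_helper G' ⟨w, hwu⟩ ?_
        intro a ha
        by_cases haw : a.1 = w
        · exact Subtype.ext haw
        · exfalso
          have hlowa : G.degree a.1 ≤ 2 := le_trans (hdeg' a haw) ha
          rcases hp3 a.1 hlowa with h | h
          · exact a.2 h
          · exact haw h
      have hdeg3' : ∃ v : ↥{v : V | v ≠ u}, 3 ≤ G'.degree v := by
        obtain ⟨v1, hv1u, hv1w⟩ := exists_third G u w hdeg3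
        have hd : 3 ≤ G.degree v1 := by
          by_contra hcon
          rcases hp3 v1 (by omega) with h | h
          · exact hv1u h
          · exact hv1w h
        exact ⟨⟨v1, hv1u⟩, le_trans hd (hdeg' ⟨v1, hv1u⟩ hv1w)⟩
      have hlt : Fintype.card ↥{v : V | v ≠ u} < n := by
        rw [← hcard]
        exact Fintype.card_subtype_lt (p := fun v => v ∈ {v : V | v ≠ u}) (x := u) (by simp)
      exact kminor_of_kminor_induce (IH _ hlt G' rfl (Or.inl hlow') hdeg3')
    · -- degree 2
      obtain ⟨w1, w2, hw12, hw⟩ := Finset.card_eq_two.mp hdu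
      have hadj1 : G.Adj u w1 := by
        rw [← SimpleGraph.mem_neighborFinset, hw]
        exact Finset.mem_insert_self _ _
      have hadj2 : G.Adj u w2 := by
        rw [← SimpleGraph.mem_neighborFinset, hw]
        exact Finset.mem_insert.mpr (Or.inr (Finset.mem_singleton_self _))
      have hnbr : ∀ z, G.Adj u z → z = w1 ∨ z = w2 := by
        intro z hz
        have : z ∈ ({w1, w2} : Finset V) := by
          rw [← hw, SimpleGraph.mem_neighborFinset]
          exact hz
        rwa [Finset.mem_insert, Finset.mem_singleton] at this
      have hw1u : w1 ≠ u := hadj1.ne'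
      have hw2u : w2 ≠ u := hadj2.ne'
      have hp3 : ∀ v, G.degree v ≤ 2 → v = u ∨ v = w1 ∨ v = w2 := by
        intro v hv
        rcases hp1 v hv with h | h
        · exact Or.inl h
        · by_cases hpu : p = u
          · exact Or.inl (h.trans hpu)
          · rcases hnbr p (hp2 hpu) with h2 | h2
            · exact Or.inr (Or.inl (h.trans h2))
            · exact Or.inr (Or.inr (h.trans h2))
      by_cases hadj12 : G.Adj w1 w2
      · -- triangle: delete u
        set G' := G.induce {v : V | v ≠ u} with hG'
        have hdeg' : ∀ a : ↥{v : V | v ≠ u}, a.1 ≠ w1 → a.1 ≠ w2 →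
            G.degree a.1 ≤ G'.degree a := by
          intro a h1 h2
          refine degree_delete_eq G a (fun h => ?_)
          rcases hnbr a.1 h with hh | hh
          · exact h1 hh
          · exact h2 hh
        have hlowsub : ∀ a : ↥{v : V | v ≠ u}, G'.degree a ≤ 2 →
            a = ⟨w1, hw1u⟩ ∨ a = ⟨w2, hw2u⟩ := by
          intro a ha
          by_cases h1 : a.1 = w1
          · exact Or.inl (Subtype.ext h1)
          by_cases h2 : a.1 = w2
          · exact Or.inr (Subtype.ext h2)
          exfalso
          have hlowa : G.degree a.1 ≤ 2 := le_trans (hdeg' a h1 h2) ha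
          rcases hp3 a.1 hlowa with h | h | h
          · exact a.2 h
          · exact h1 h
          · exact h2 h
        have hadj12' : G'.Adj ⟨w1, hw1u⟩ ⟨w2, hw2u⟩ := hadj12
        have hlow' := low_pair_helper G' ⟨w1, hw1u⟩ ⟨w2, hw2u⟩ hadj12' hlowsub
        have hdeg3' : ∃ v : ↥{v : V | v ≠ u}, 3 ≤ G'.degree v := by
          obtain ⟨v1, hv1u, hv1w1, hv1w2⟩ := exists_fourth G u w1 w2 hdeg3
          have hd : 3 ≤ G.degree v1 := by
            by_contra hcon
            rcases hp3 v1 (by omega) with h | h | h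
            · exact hv1u h
            · exact hv1w1 h
            · exact hv1w2 h
          exact ⟨⟨v1, hv1u⟩, le_trans hd (hdeg' ⟨v1, hv1u⟩ hv1w1 hv1w2)⟩
        have hlt : Fintype.card ↥{v : V | v ≠ u} < n := by
          rw [← hcard]
          exact Fintype.card_subtype_lt (p := fun v => v ∈ {v : V | v ≠ u}) (x := u) (by simp)
        exact kminor_of_kminor_induce (IH _ hlt G' rfl hlow' hdeg3')
      · -- no triangle: contract w1 u
        have hadjw1u : G.Adj w1 u := hadj1.symm
        set G' := contractG G w1 u with hG'
        have hcom : ∀ z, ¬ (G.Adj w1 z ∧ G.Adj u z) := by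
          rintro z ⟨h1z, h2z⟩
          rcases hnbr z h2z with rfl | rfl
          · exact G.irrefl h1z
          · exact hadj12 h1z
        have hinter : (G.neighborFinset w1) ∩ (G.neighborFinset u) = ∅ := by
          rw [Finset.eq_empty_iff_forall_notMem]
          intro z hz
          rw [Finset.mem_inter, SimpleGraph.mem_neighborFinset,
            SimpleGraph.mem_neighborFinset] at hz
          exact hcom z hz
        have hmerged : G.degree w1 ≤ G'.degree ⟨w1, hadjw1u.ne⟩ := by
          have h1 := degree_contract_merged G hadjw1u
          rw [hinter, ← hG'] at h1
          have hduw : G.degree u = 2 := hdu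
          simp only [Finset.card_empty] at h1
          omega
        have hlowG : ∀ a : {v : V // v ≠ u}, G'.degree a ≤ 2 → G.degree a.1 ≤ 2 := by
          intro a ha
          by_cases hma : a = ⟨w1, hadjw1u.ne⟩
          · subst hma
            show G.degree w1 ≤ 2
            omega
          · have hne : a.1 ≠ w1 := fun h => hma (Subtype.ext h)
            have hde := degree_contract_eq G a hne (hcom a.1)
            rw [← hG'] at hde
            omega
        have hlow' : (Finset.univ.filter (fun v => G'.degree v ≤ 2)).card ≤ 1 := by
          rw [Finset.card_le_one]
          intro a ha b hb
          rw [Finset.mem_filter] at ha hb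
          have ha2 := hlowG a ha.2
          have hb2 := hlowG b hb.2
          have hap : a.1 = p := (hp1 a.1 ha2).resolve_left a.2
          have hbp : b.1 = p := (hp1 b.1 hb2).resolve_left b.2
          exact Subtype.ext (hap.trans hbp.symm)
        have hdeg3' : ∃ v : {v : V // v ≠ u}, 3 ≤ G'.degree v := by
          obtain ⟨v1, hv1u, hv1p⟩ := exists_third G u p hdeg3
          have hd : 3 ≤ G.degree v1 := by
            by_contra hcon
            rcases hp1 v1 (by omega) with h | h
            · exact hv1u h
            · exact hv1p h
          by_cases hvw1 : v1 = w1
          · subst hvw1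
            exact ⟨⟨v1, hv1u⟩, le_trans hd hmerged⟩
          · have hde := degree_contract_eq G ⟨v1, hv1u⟩ hvw1 (hcom v1)
            rw [← hG'] at hde
            exact ⟨⟨v1, hv1u⟩, le_trans hd hde⟩
        have hlt : Fintype.card {v : V // v ≠ u} < n := by
          rw [← hcard]
          exact Fintype.card_subtype_lt (p := fun v => v ≠ u) (x := u) (by simp)
        exact kminor_contract hadjw1u (IH _ hlt G' rfl (Or.inl hlow') hdeg3')
  · -- minimum degree ≥ 3
    push_neg at hLowEx
    have hd3 : ∀ v : V, 3 ≤ G.degree v := fun v => by have := hLowEx v; omega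
    by_cases htri : ∃ x y : V, G.Adj x y ∧
        ((G.neighborFinset x) ∩ (G.neighborFinset y)).card ≤ 1
    · -- contract an edge in at most one triangle
      obtain ⟨x, y, hxy, ht⟩ := htri
      set G' := contractG G x y with hG'
      have hmerged : 3 ≤ G'.degree ⟨x, hxy.ne⟩ := by
        have h1 := degree_contract_merged G hxy
        rw [← hG'] at h1
        have h2 := hd3 x
        have h3 := hd3 y
        omega
      have hlowC : ∀ a : {v : V // v ≠ y}, G'.degree a ≤ 2 →
          a.1 ∈ (G.neighborFinset x) ∩ (G.neighborFinset y) := by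
        intro a ha
        have hax : a ≠ ⟨x, hxy.ne⟩ := by
          rintro rfl
          omega
        by_contra hcm
        have hcm' : ¬ (G.Adj x a.1 ∧ G.Adj y a.1) := by
          intro hc2
          apply hcm
          rw [Finset.mem_inter, SimpleGraph.mem_neighborFinset, SimpleGraph.mem_neighborFinset]
          exact hc2
        have hde := degree_contract_eq G a (fun h => hax (Subtype.ext h)) hcm'
        rw [← hG'] at hde
        have := hd3 a.1
        omega
      have hlow' : (Finset.univ.filter (fun v => G'.degree v ≤ 2)).card ≤ 1 := by
        rw [Finset.card_le_one]
        intro a ha b hb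
        rw [Finset.mem_filter] at ha hb
        exact Subtype.ext (Finset.card_le_one.mp ht a.1 (hlowC a ha.2) b.1 (hlowC b hb.2))
      have hdeg3' : ∃ v : {v : V // v ≠ y}, 3 ≤ G'.degree v := ⟨⟨x, hxy.ne⟩, hmerged⟩
      have hlt : Fintype.card {v : V // v ≠ y} < n := by
        rw [← hcard]
        exact Fintype.card_subtype_lt (p := fun v => v ≠ y) (x := y) (by simp)
      exact kminor_contract hxy (IH _ hlt G' rfl (Or.inl hlow') hdeg3')
    · -- every edge is in ≥ 2 triangles
      push_neg at htri
      obtain ⟨v0, hv0⟩ := hdeg3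
      have hne : Nonempty ↥(G.neighborSet v0) := by
        have hpos : 0 < (G.neighborFinset v0).card := by
          have : 3 ≤ (G.neighborFinset v0).card := hv0
          omega
        obtain ⟨w, hwm⟩ := Finset.card_pos.mp hpos
        rw [SimpleGraph.mem_neighborFinset] at hwm
        exact ⟨⟨w, hwm⟩⟩
      have hmind : ∀ uu : ↥(G.neighborSet v0), 2 ≤ (G.induce (G.neighborSet v0)).degree uu := by
        intro uu
        have hadj : G.Adj uu.1 v0 := (uu.2 : G.Adj v0 uu.1).symm
        have hcommon := htri uu.1 v0 hadj
        have hdi := degree_induce_neighborSet G uu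
        omega
      obtain ⟨uu, c, hc⟩ := exists_cycle_of_min_degree_two _ hne hmind
      have hcyc' : (c.map (⟨Subtype.val, fun hab => hab⟩ :
          G.induce (G.neighborSet v0) →g G)).IsCycle := by
        rw [SimpleGraph.Walk.map_isCycle_iff_of_injective Subtype.val_injective]
        exact hc
      obtain ⟨S, hSne, hSdisj, hSconn, hSadj, hSsub⟩ := cycle_three_sets _ hcyc'
      refine kminor_star v0 S hSne hSdisj hSconn hSadj ?_
      intro i z hz
      have hz2 := hSsub i hz
      rw [Set.mem_setOf_eq, SimpleGraph.Walk.support_map] at hz2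
      obtain ⟨z', hz', rfl⟩ := List.mem_map.mp hz2
      exact z'.2

/-- Mader-type theorem: a graph with at least `3n` edges has a `K₅` minor. -/
theorem kminor_five : ∀ (n : ℕ) {V : Type*} [Fintype V] (G : SimpleGraph V),
    Fintype.card V = n → 1 ≤ n → 3 * n ≤ G.edgeFinset.card → KMinor G 5 := by
  intro n
  induction n using Nat.strong_induction_on with
  | _ n IH =>
  intro V _ G hcard hn he
  classical
  have hchoose := G.card_edgeFinset_le_card_choose_two
  rw [hcard] at hchoose
  have h7 : 7 ≤ n := by
    by_contra hcc
    push_neg at hcc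
    have h1 : 3 * n ≤ n.choose 2 := le_trans he hchoose
    rw [Nat.choose_two_right] at h1
    have h2 : n * (n - 1) / 2 * 2 ≤ n * (n - 1) := Nat.div_mul_le_self _ _
    have h3 : n * (n - 1) ≤ n * 5 := Nat.mul_le_mul_left n (by omega)
    omega
  by_cases hdel : ∃ v : V, G.degree v ≤ 3
  · -- delete a vertex of degree ≤ 3
    obtain ⟨v, hv⟩ := hdel
    have hed := card_edge_delete G v
    have hcard' : Fintype.card ↥{w : V | w ≠ v} = n - 1 := by
      rw [Set.card_ne_eq, hcard]
    have hlt : n - 1 < n := by omega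
    have he' : 3 * (n - 1) ≤ (G.induce {w : V | w ≠ v}).edgeFinset.card := by omega
    exact kminor_of_kminor_induce (IH _ hlt (G.induce {w : V | w ≠ v}) hcard' (by omega) he')
  · push_neg at hdel
    have hd4 : ∀ v : V, 4 ≤ G.degree v := fun v => hdel v
    by_cases htri : ∃ x y : V, G.Adj x y ∧
        ((G.neighborFinset x) ∩ (G.neighborFinset y)).card ≤ 2
    · -- contract
      obtain ⟨x, y, hxy, ht⟩ := htri
      set G' := contractG G x y with hG'
      have hed := card_edge_contract G hxy
      rw [← hG'] at hed
      have hcard' : Fintype.card {w : V // w ≠ y} = n - 1 := by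
        have : Fintype.card ↥{w : V | w ≠ y} = n - 1 := by
          rw [Set.card_ne_eq, hcard]
        exact this
      have hlt : n - 1 < n := by omega
      have he' : 3 * (n - 1) ≤ G'.edgeFinset.card := by omega
      exact kminor_contract hxy (IH _ hlt G' hcard' (by omega) he')
    · -- every edge in ≥ 3 triangles
      push_neg at htri
      obtain ⟨v0⟩ : Nonempty V := by
        rw [← Fintype.card_pos_iff, hcard]
        omega
      have hne : Nonempty ↥(G.neighborSet v0) := by
        have hpos : 0 < (G.neighborFinset v0).card := by
          have : 4 ≤ (G.neighborFinset v0).card := hd4 v0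
          omega
        obtain ⟨w, hwm⟩ := Finset.card_pos.mp hpos
        rw [SimpleGraph.mem_neighborFinset] at hwm
        exact ⟨⟨w, hwm⟩⟩
      have hmind : ∀ uu : ↥(G.neighborSet v0),
          3 ≤ (G.induce (G.neighborSet v0)).degree uu := by
        intro uu
        have hadj : G.Adj uu.1 v0 := (uu.2 : G.Adj v0 uu.1).symm
        have hcommon := htri uu.1 v0 hadj
        have hdi := degree_induce_neighborSet G uu
        omega
      have h4 : KMinor (G.induce (G.neighborSet v0)) 4 := by
        refine kminor_four (Fintype.card ↥(G.neighborSet v0)) _ rfl (Or.inl ?_) ?_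
        · rw [Finset.card_le_one]
          intro a ha b hb
          exfalso
          rw [Finset.mem_filter] at ha
          have := hmind a
          have h2 : (G.induce (G.neighborSet v0)).degree a ≤ 2 := by convert ha.2
          omega
        · obtain ⟨uu⟩ := hne
          exact ⟨uu, hmind uu⟩
      obtain ⟨S, hSne, hSdisj, hSconn, hSadj, hSsub⟩ := kminor_induce h4
      exact kminor_star v0 S hSne hSdisj hSconn hSadj hSsub

/-- a nonempty K₅-minor-free graph has a vertex of degree at most 5 -/
lemma exists_low_degree [Fintype V] (G : SimpleGraph V) (hne : Nonempty V)
    (hfree : ¬ KMinor G 5) : ∃ v : V, G.degree v ≤ 5 := by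
  classical
  by_contra hc
  push_neg at hc
  have hd6 : ∀ v : V, 6 ≤ G.degree v := fun v => hc v
  have hsum : 6 * Fintype.card V ≤ ∑ v : V, G.degree v := by
    calc 6 * Fintype.card V = ∑ _v : V, 6 := by
          rw [Finset.sum_const, Finset.card_univ, smul_eq_mul, Nat.mul_comm]
    _ ≤ ∑ v : V, G.degree v := Finset.sum_le_sum (fun v _ => hd6 v)
  rw [SimpleGraph.sum_degrees_eq_twice_card_edges] at hsum
  have hpos : 1 ≤ Fintype.card V := Fintype.card_pos_iff.mpr hne
  exact hfree (kminor_five (Fintype.card V) G rfl hpos (by omega))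

section Greedy

/-- no cycle of `G` has all its vertices inside `S` -/
def NoCycleIn (G : SimpleGraph V) (S : Set V) : Prop :=
  ∀ (u : V) (w : G.Walk u u), w.IsCycle → ¬ (∀ x ∈ w.support, x ∈ S)

lemma noCycleIn_congr {G : SimpleGraph V} {S T : Set V} (h : S = T) (hS : NoCycleIn G S) :
    NoCycleIn G T := h ▸ hS

lemma degree_induce_finset [Fintype V] (G : SimpleGraph V) (s : Finset V)
    (a : ↥(↑s : Set V)) :
    (G.induce (↑s : Set V)).degree a = (s.filter (fun b => G.Adj a.1 b)).card := by
  classical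
  have himg : (((G.induce (↑s : Set V)).neighborFinset a).image Subtype.val) =
      s.filter (fun b => G.Adj a.1 b) := by
    ext b
    rw [Finset.mem_image, Finset.mem_filter]
    constructor
    · rintro ⟨c, hc, rfl⟩
      rw [SimpleGraph.mem_neighborFinset] at hc
      exact ⟨c.2, hc⟩
    · rintro ⟨hb, hadj⟩
      refine ⟨⟨b, hb⟩, ?_, rfl⟩
      rw [SimpleGraph.mem_neighborFinset]
      exact hadj
  unfold SimpleGraph.degree
  rw [← himg, Finset.card_image_of_injective _ Subtype.val_injective]

/-- inserting a vertex with at most one neighbour in an acyclic set keeps it acyclic -/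
lemma nocycle_insert {G : SimpleGraph V} {T : Set V} {v : V} (hT : NoCycleIn G T)
    (hv1 : ∀ a b, a ∈ T → b ∈ T → G.Adj v a → G.Adj v b → a = b) :
    NoCycleIn G (insert v T) := by
  intro u w hcyc hsupp
  by_cases hvmem : v ∈ w.support
  · -- rotate the cycle to start at v
    set w' := w.rotate v hvmem with hw'
    have hcyc' : w'.IsCycle := Walk.IsCycle.rotate hvmem hcyc
    have hmem' : ∀ x, x ∈ w'.support → x ∈ w.support := by
      intro x hx
      rw [Walk.support_eq_cons] at hx
      rcases List.mem_cons.mp hx with rfl | hx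
      · exact hvmem
      · have hperm := Walk.support_rotate w v hvmem
        have hx2 : x ∈ w.support.tail := (hperm.mem_iff).mp hx
        rw [Walk.support_eq_cons]
        exact List.mem_cons_of_mem _ hx2
    have hsupp' : ∀ x ∈ w'.support, x ∈ insert v T := fun x hx => hsupp x (hmem' x hx)
    clear_value w'
    cases w' with
    | nil =>
      have h3 := hcyc'.three_le_length
      simp at h3
    | @cons _ a _ h1 q =>
      have hqpath : q.IsPath := ((Walk.cons_isCycle_iff q h1).mp hcyc').1
      have hhead : s(v, a) ∉ q.edges := ((Walk.cons_isCycle_iff q h1).mp hcyc').2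
      have hva : v ≠ a := h1.ne
      obtain ⟨b, h2, r, hqr⟩ := Walk.exists_eq_cons_of_ne hva q.reverse
      have haT : a ∈ T := by
        have hmem := hsupp' a
          (by rw [Walk.support_cons]; exact List.mem_cons_of_mem _ q.start_mem_support)
        rw [Set.mem_insert_iff] at hmem
        rcases hmem with heq | hmm
        · exact absurd (heq ▸ h1) (G.irrefl (v := v))
        · exact hmm
      have hbT : b ∈ T := by
        have hbq : b ∈ q.support := by
          have : b ∈ q.reverse.support := by
            rw [hqr, Walk.support_cons]
            exact List.mem_cons_of_mem _ r.start_mem_support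
          rwa [Walk.support_reverse, List.mem_reverse] at this
        have hmem := hsupp' b (by rw [Walk.support_cons]; exact List.mem_cons_of_mem _ hbq)
        rw [Set.mem_insert_iff] at hmem
        rcases hmem with heq | hmm
        · exact absurd (heq ▸ h2) (G.irrefl (v := v))
        · exact hmm
      have hab : a = b := hv1 a b haT hbT h1 h2
      -- contradiction with nodup edges
      have hvb : s(v, b) ∈ q.edges := by
        have : s(v, b) ∈ q.reverse.edges := by
          rw [hqr, Walk.edges_cons]
          exact List.mem_cons_self
        rwa [Walk.edges_reverse, List.mem_reverse] at this
      rw [← hab] at hvb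
      exact hhead hvb
  · -- the cycle avoids v, so lives in T
    exact hT u w hcyc (fun x hx => by
      rcases hsupp x hx with rfl | hxT
      · exact absurd hx hvmem
      · exact hxT)

lemma greedy_coloring [Fintype V] (G : SimpleGraph V) (hfree : ¬ KMinor G 5) :
    ∀ (s : Finset V), ∃ φ : V → Fin 3,
      ∀ i : Fin 3, NoCycleIn G {v : V | v ∈ s ∧ φ v = i} := by
  classical
  intro s
  induction s using Finset.strongInduction with
  | _ s IHs =>
  rcases Finset.eq_empty_or_nonempty s with rfl | hsne
  · refine ⟨fun _ => 0, fun i u w hc hsupp => ?_⟩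
    have := hsupp u w.start_mem_support
    simp at this
  · -- find a vertex of small degree in s
    have hne : Nonempty ↥(↑s : Set V) := by
      obtain ⟨x, hx⟩ := hsne
      exact ⟨⟨x, hx⟩⟩
    have hfree' : ¬ KMinor (G.induce (↑s : Set V)) 5 :=
      fun hk => hfree (kminor_of_kminor_induce hk)
    obtain ⟨⟨v, hvs⟩, hvdeg⟩ := exists_low_degree (G.induce (↑s : Set V)) hne hfree'
    have hvdeg : (s.filter (fun b => G.Adj v b)).card ≤ 5 := by
      rw [← degree_induce_finset G s ⟨v, hvs⟩]; convert hvdeg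
    set nbrs : Finset V := (s.erase v).filter (fun b => G.Adj v b) with hnbrs
    have hnbrscard : nbrs.card ≤ 5 := by
      refine le_trans (Finset.card_le_card ?_) hvdeg
      intro b hb
      rw [hnbrs, Finset.mem_filter, Finset.mem_erase] at hb
      rw [Finset.mem_filter]
      exact ⟨hb.1.2, hb.2⟩
    obtain ⟨φ', hφ'⟩ := IHs (s.erase v) (Finset.erase_ssubset hvs)
    -- find a colour with at most one neighbour
    have hcol : ∃ i : Fin 3, (nbrs.filter (fun b => φ' b = i)).card ≤ 1 := by
      by_contra hcon
      push_neg at hcon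
      have hsum : nbrs.card = ∑ i : Fin 3, (nbrs.filter (fun b => φ' b = i)).card :=
        Finset.card_eq_sum_card_fiberwise (fun x _ => Finset.mem_univ (φ' x))
      have hge : ∀ i : Fin 3, 2 ≤ (nbrs.filter (fun b => φ' b = i)).card :=
        fun i => hcon i
      have h6 : 6 ≤ ∑ i : Fin 3, (nbrs.filter (fun b => φ' b = i)).card := by
        calc (6 : ℕ) = ∑ _i : Fin 3, 2 := by simp
        _ ≤ _ := Finset.sum_le_sum (fun i _ => hge i)
      omega
    obtain ⟨i, hi⟩ := hcol
    refine ⟨Function.update φ' v i, fun j => ?_⟩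
    by_cases hji : j = i
    · subst hji
      have hset : {x : V | x ∈ s ∧ Function.update φ' v j x = j} =
          insert v {x : V | x ∈ s.erase v ∧ φ' x = j} := by
        ext x
        simp only [Set.mem_setOf_eq, Set.mem_insert_iff, Finset.mem_erase]
        constructor
        · rintro ⟨hxs, hxc⟩
          by_cases hxv : x = v
          · exact Or.inl hxv
          · rw [Function.update_of_ne hxv] at hxc
            exact Or.inr ⟨⟨hxv, hxs⟩, hxc⟩
        · rintro (rfl | ⟨⟨hxv, hxs⟩, hxc⟩)
          · exact ⟨hvs, by rw [Function.update_self]⟩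
          · exact ⟨hxs, by rw [Function.update_of_ne hxv]; exact hxc⟩
      refine noCycleIn_congr hset.symm (nocycle_insert (hφ' j) ?_)
      intro a b ha hb hva hvb
      rw [Set.mem_setOf_eq] at ha hb
      refine Finset.card_le_one.mp hi a ?_ b ?_
      · rw [Finset.mem_filter, hnbrs, Finset.mem_filter]
        exact ⟨⟨ha.1, hva⟩, ha.2⟩
      · rw [Finset.mem_filter, hnbrs, Finset.mem_filter]
        exact ⟨⟨hb.1, hvb⟩, hb.2⟩
    · have hset : {x : V | x ∈ s ∧ Function.update φ' v i x = j} =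
          {x : V | x ∈ s.erase v ∧ φ' x = j} := by
        ext x
        simp only [Set.mem_setOf_eq, Finset.mem_erase]
        constructor
        · rintro ⟨hxs, hxc⟩
          by_cases hxv : x = v
          · subst hxv
            rw [Function.update_self] at hxc
            exact absurd hxc.symm hji
          · rw [Function.update_of_ne hxv] at hxc
            exact ⟨⟨hxv, hxs⟩, hxc⟩
        · rintro ⟨⟨hxv, hxs⟩, hxc⟩
          exact ⟨hxs, by rw [Function.update_of_ne hxv]; exact hxc⟩
      exact noCycleIn_congr hset.symm (hφ' j)

/-- partition of a K₅-minor-free graph into three induced forests -/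
lemma three_forests [Fintype V] (G : SimpleGraph V) (hfree : ¬ KMinor G 5) :
    ∃ φ : V → Fin 3, ∀ i : Fin 3, NoCycleIn G {v : V | φ v = i} := by
  obtain ⟨φ, h⟩ := greedy_coloring G hfree Finset.univ
  refine ⟨φ, fun i u w hc hsup => h i u w hc (fun x hx => ⟨Finset.mem_univ x, hsup x hx⟩)⟩

end Greedy

section Switching

lemma pm_mul {A B : ℤ} (hA : A = 1 ∨ A = -1) (hB : B = 1 ∨ B = -1) :
    A * B = 1 ∨ A * B = -1 := by
  rcases hA with rfl | rfl <;> rcases hB with rfl | rfl <;> simp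

lemma pm_sq {A : ℤ} (hA : A = 1 ∨ A = -1) : A * A = 1 := by
  rcases hA with rfl | rfl <;> norm_num

lemma pm_cancel {A B C : ℤ} (hA : A = 1 ∨ A = -1) (hB : B = 1 ∨ B = -1)
    (h : A * B * C = 1) : C = A * B := by
  rcases hA with rfl | rfl <;> rcases hB with rfl | rfl <;> omega

lemma prod_signs (σ : Sym2 V → ℤ) : ∀ (l : List (Sym2 V)),
    (∀ e ∈ l, σ e = 1 ∨ σ e = -1) →
    (l.map σ).prod = if Even (List.countP (fun e => decide (σ e = -1)) l) then 1 else -1 := by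
  intro l
  induction l with
  | nil => simp
  | cons e t ih =>
    intro hpm
    rw [List.map_cons, List.prod_cons, List.countP_cons,
      ih (fun e' he' => hpm e' (List.mem_cons_of_mem _ he'))]
    rcases hpm e (List.mem_cons_self) with h1 | h1
    · rw [h1]
      norm_num
    · rw [h1]
      have hdec : (decide ((-1 : ℤ) = -1)) = true := by norm_num
      rw [hdec]
      simp only [if_true]
      by_cases hE : Even (List.countP (fun e => decide (σ e = -1)) t)
      · rw [if_pos hE, if_neg (by simp [Nat.even_add_one, hE])]
        norm_num
      · rw [if_neg hE, if_pos (by simp [Nat.even_add_one, hE])]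
        norm_num

lemma tele {W : Type*} (H : SimpleGraph W) (σ' : Sym2 W → ℤ) (θ : W → ℤ)
    (hθ : ∀ w, θ w = 1 ∨ θ w = -1)
    (hprop : ∀ ⦃a b : W⦄, H.Adj a b → σ' s(a, b) = θ a * θ b) :
    ∀ {a b : W} (p : H.Walk a b), (p.edges.map σ').prod = θ a * θ b := by
  intro a b p
  induction p with
  | nil => simp [pm_sq (hθ _)]
  | @cons c d e hcd q ih =>
    rw [Walk.edges_cons, List.map_cons, List.prod_cons, ih, hprop hcd]
    have h1 := pm_sq (hθ d)
    calc θ c * θ d * (θ d * θ e) = θ c * (θ d * θ d) * θ e := by ring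
    _ = θ c * θ e := by rw [h1]; ring

theorem exists_switching : ∀ (n : ℕ) {V : Type*} [Fintype V] (G : SimpleGraph V)
    (σ : Sym2 V → ℤ), Fintype.card V = n → IsSignature G σ → IsBalanced G σ →
    ∃ θ : V → ℤ, (∀ v, θ v = 1 ∨ θ v = -1) ∧
      ∀ ⦃x y : V⦄, G.Adj x y → σ s(x, y) = θ x * θ y := by
  intro n
  induction n using Nat.strong_induction_on with
  | _ n IH =>
  intro V _ G σ hcard hsig hbal
  classical
  rcases isEmpty_or_nonempty V with hE | hNE
  · exact ⟨fun _ => 1, fun v => (hE.elim v), fun x y _ => (hE.elim x)⟩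
  obtain ⟨v⟩ := hNE
  set G' := G.induce {w : V | w ≠ v} with hG'
  set σ' : Sym2 ↥{w : V | w ≠ v} → ℤ := fun e => σ (Sym2.map Subtype.val e) with hσ'
  set hinc : G' →g G := ⟨Subtype.val, fun h => h⟩ with hincdef
  have hincinj : Function.Injective ⇑hinc := fun a b h => Subtype.val_injective h
  have hsig' : IsSignature G' σ' := by
    intro e he
    induction e with
    | _ a b =>
      rw [SimpleGraph.mem_edgeSet] at he
      have hadj : G.Adj a.1 b.1 := he
      have hs := hsig s(a.1, b.1) (by rwa [SimpleGraph.mem_edgeSet])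
      simp only [hσ', Sym2.map_pair_eq]
      exact hs
  have hbal' : IsBalanced G' σ' := by
    intro u w hw
    have hmapped : (w.map hinc).IsCycle := by
      rw [SimpleGraph.Walk.map_isCycle_iff_of_injective hincinj]
      exact hw
    have hev := hbal (w.map hinc) hmapped
    rw [Walk.edges_map, List.countP_map] at hev
    have hpred : (fun e => decide (σ' e = -1)) =
        ((fun e => decide (σ e = -1)) ∘ Sym2.map ⇑hinc) := by
      funext e
      rfl
    rw [hpred]
    exact hev
  have hcard' : Fintype.card ↥{w : V | w ≠ v} < n := by
    rw [← hcard]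
    exact Fintype.card_subtype_lt (p := fun w => w ∈ {w : V | w ≠ v}) (x := v) (by simp)
  obtain ⟨θ', hθpm, hθprop⟩ := IH _ hcard' G' σ' rfl hsig' hbal'
  set ρ : ↥{w : V | w ≠ v} → G'.ConnectedComponent := G'.connectedComponentMk with hρ
  set f : G'.ConnectedComponent → ℤ := fun C =>
    if h : ∃ w : ↥{w : V | w ≠ v}, ρ w = C ∧ G.Adj v w.1 then
      σ s(v, h.choose.1) * θ' h.choose else 1 with hf
  have hfpm : ∀ C, f C = 1 ∨ f C = -1 := by
    intro C
    rw [hf]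
    dsimp only
    split
    case isTrue h =>
      exact pm_mul (hsig _ (by rw [SimpleGraph.mem_edgeSet]; exact h.choose_spec.2)) (hθpm _)
    case isFalse h => exact Or.inl rfl
  set θ : V → ℤ := fun u => if h : u = v then 1 else f (ρ ⟨u, h⟩) * θ' ⟨u, h⟩ with hθdef
  have hθv : θ v = 1 := by rw [hθdef]; simp
  have hθne : ∀ (u : V) (h : u ≠ v), θ u = f (ρ ⟨u, h⟩) * θ' ⟨u, h⟩ := by
    intro u h
    rw [hθdef]
    simp [h]
  refine ⟨θ, ?_, ?_⟩
  · intro u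
    by_cases h : u = v
    · rw [h, hθv]
      exact Or.inl rfl
    · rw [hθne u h]
      exact pm_mul (hfpm _) (hθpm _)
  · have hkey : ∀ (y : V) (hyv : y ≠ v), G.Adj v y → σ s(v, y) = θ y := by
      intro y hyv hadj
      set y' : ↥{w : V | w ≠ v} := ⟨y, hyv⟩ with hy'
      have hex : ∃ w : ↥{w : V | w ≠ v}, ρ w = ρ y' ∧ G.Adj v w.1 := ⟨y', rfl, hadj⟩
      set w₀ := hex.choose with hw₀
      have hspec : ρ w₀ = ρ y' ∧ G.Adj v w₀.1 := hex.choose_spec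
      have hfval : f (ρ y') = σ s(v, w₀.1) * θ' w₀ := by
        rw [hf]
        dsimp only
        rw [dif_pos hex]
      have hθy : θ y = f (ρ y') * θ' y' := hθne y hyv
      by_cases hwy : w₀ = y'
      · rw [hθy, hfval, hwy]
        calc σ s(v, y'.1) = σ s(v, y'.1) * (θ' y' * θ' y') := by rw [pm_sq (hθpm y')]; ring
        _ = σ s(v, y'.1) * θ' y' * θ' y' := by ring
      · have hreach : G'.Reachable w₀ y' := (SimpleGraph.ConnectedComponent.eq).mp hspec.1
        obtain ⟨q⟩ := hreach
        set p := q.bypass with hp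
        have hppath : p.IsPath := q.bypass_isPath
        set P := p.map hinc with hP
        have hPpath : P.IsPath := Walk.map_isPath_of_injective hincinj hppath
        have hvP : v ∉ P.support := by
          rw [hP, Walk.support_map]
          intro hmem
          obtain ⟨z, hz, hzv⟩ := List.mem_map.mp hmem
          have : (z : V) = v := hzv
          exact z.2 this
        have hconcatpath : (P.concat hadj.symm).IsPath := by
          have h1 : (Walk.cons hadj P.reverse).IsPath := by
            rw [Walk.cons_isPath_iff]
            constructor
            · exact hPpath.reverse
            · rw [Walk.support_reverse, List.mem_reverse]
              exact hvP
          have h2 := h1.reverse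
          rw [Walk.reverse_cons, Walk.reverse_reverse] at h2
          exact h2
        have hnotedge : s(v, w₀.1) ∉ (P.concat hadj.symm).edges := by
          rw [Walk.edges_concat, List.concat_eq_append]
          intro hmem
          rcases List.mem_append.mp hmem with hin | heq
          · exact hvP (Walk.fst_mem_support_of_mem_edges P hin)
          · rw [List.mem_singleton] at heq
            rw [Sym2.eq_iff] at heq
            rcases heq with ⟨hvy2, hwv⟩ | ⟨-, hwy2⟩
            · exact hadj.ne hvy2
            · exact hwy (Subtype.ext hwy2)

        set c : G.Walk v v := Walk.cons hspec.2 (P.concat hadj.symm) with hcdef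
        have hcyc : c.IsCycle := (Walk.cons_isCycle_iff _ _).mpr ⟨hconcatpath, hnotedge⟩
        have heven := hbal c hcyc
        have hallpm : ∀ e ∈ c.edges, σ e = 1 ∨ σ e = -1 :=
          fun e he => hsig e (Walk.edges_subset_edgeSet c he)
        have hprod : (c.edges.map σ).prod = 1 := by
          rw [prod_signs σ c.edges hallpm, if_pos heven]
        have hPedges : (P.edges.map σ).prod = θ' w₀ * θ' y' := by
          have h1 : P.edges = p.edges.map (Sym2.map Subtype.val) := by
            rw [hP, Walk.edges_map]
            rfl
          rw [h1, List.map_map]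
          have h2 : (σ ∘ Sym2.map Subtype.val) = σ' := by
            funext e
            rfl
          rw [h2]
          exact tele G' σ' θ' hθpm hθprop p
        have hcedges : c.edges = s(v, w₀.1) :: (P.edges.concat s(y, v)) := by
          rw [hcdef, Walk.edges_cons, Walk.edges_concat]
          rfl
        rw [hcedges, List.map_cons, List.prod_cons, List.concat_eq_append,
          List.map_append, List.prod_append, hPedges] at hprod
        simp only [List.map_cons, List.map_nil, List.prod_cons, List.prod_nil, mul_one] at hprod
        have hyx : s(y, v) = s(v, y) := Sym2.eq_swap
        rw [hyx] at hprod
        have hA := hsig s(v, w₀.1) (by rw [SimpleGraph.mem_edgeSet]; exact hspec.2)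
        have hB : θ' w₀ * θ' y' = 1 ∨ θ' w₀ * θ' y' = -1 := pm_mul (hθpm _) (hθpm _)
        have hfinal : σ s(v, y) = σ s(v, w₀.1) * (θ' w₀ * θ' y') := by
          apply pm_cancel hA hB
          calc σ s(v, w₀.1) * (θ' w₀ * θ' y') * σ s(v, y)
              = σ s(v, w₀.1) * (θ' w₀ * θ' y' * σ s(v, y)) := by ring
          _ = 1 := hprod
        rw [hfinal, hθy, hfval]
        ring
    intro x y hxy
    by_cases hxv : x = v
    · subst hxv
      rw [hθv, one_mul]
      exact hkey y hxy.ne' hxy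
    · by_cases hyv : y = v
      · rw [hyv, hθv, mul_one]
        have hres := hkey x hxv (by rw [hyv] at hxy; exact hxy.symm)
        rw [show s(v, x) = s(x, v) from Sym2.eq_swap] at hres
        exact hres
      · have hadj' : G'.Adj ⟨x, hxv⟩ ⟨y, hyv⟩ := hxy
        have h1 := hθprop hadj'
        have hcomp : ρ ⟨x, hxv⟩ = ρ ⟨y, hyv⟩ :=
          SimpleGraph.ConnectedComponent.sound hadj'.reachable
        rw [hθne x hxv, hθne y hyv, hcomp]
        have h2 : σ' s(⟨x, hxv⟩, ⟨y, hyv⟩) = σ s(x, y) := by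
          simp only [hσ', Sym2.map_pair_eq]
        rw [← h2, h1]
        have hsq := pm_sq (hfpm (ρ ⟨y, hyv⟩))
        calc θ' ⟨x, hxv⟩ * θ' ⟨y, hyv⟩
            = (f (ρ ⟨y, hyv⟩) * f (ρ ⟨y, hyv⟩)) * (θ' ⟨x, hxv⟩ * θ' ⟨y, hyv⟩) := by
              rw [hsq]; ring
        _ = f (ρ ⟨y, hyv⟩) * θ' ⟨x, hxv⟩ * (f (ρ ⟨y, hyv⟩) * θ' ⟨y, hyv⟩) := by ring

end Switching

lemma walk_const {H : SimpleGraph V} {f : V → Fin 3}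
    (hsame : ∀ a b : V, H.Adj a b → f a = f b) :
    ∀ {a b : V} (p : H.Walk a b) (x : V), x ∈ p.support → f x = f a := by
  intro a b p
  induction p with
  | nil =>
    intro x hx
    rw [Walk.support_nil, List.mem_singleton] at hx
    rw [hx]
  | cons h q ih =>
    intro x hx
    rw [Walk.support_cons] at hx
    rcases List.mem_cons.mp hx with rfl | hx2
    · rfl
    · rw [ih x hx2]
      exact (hsame _ _ h).symm

end Stmt6Aux


/-- every edge-maximal `K₅`-minor-free graph with balanced signature has
signed vertex arboricity at most 3, i.e. admits a signed tree-3-coloring with colors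
from `M₃ = {-1, 0, 1}`. -/
theorem stmt6 {V : Type*} [Fintype V] (G : SimpleGraph V)
    (hG : EdgeMaximalK5MinorFree G)
    (σ : Sym2 V → ℤ) (hσ : IsSignature G σ) (hb : IsBalanced G σ) :
    signedVertexArboricity G σ ≤ 3 ∧
      ∃ c : V → ℤ, IsSignedTreeColoring G σ c ∧ ∀ v, c v ∈ ({-1, 0, 1} : Set ℤ) := by
  classical
  open Stmt6Aux in
  obtain ⟨hfree0, -⟩ := hG
  have hfree : ¬ Stmt6Aux.KMinor G 5 :=
    fun h => hfree0 ((Stmt6Aux.hasK5Minor_iff_kminor G).mpr h)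
  obtain ⟨φ, hφ⟩ := Stmt6Aux.three_forests G hfree
  obtain ⟨θ, hθpm, hθprop⟩ := Stmt6Aux.exists_switching (Fintype.card V) G σ rfl hσ hb
  set c : V → ℤ := fun v => if φ v = 0 then 0 else (if φ v = 1 then θ v else -θ v) with hcdef
  have hcases : ∀ v : V, φ v = 0 ∨ φ v = 1 ∨ φ v = 2 := by
    intro v
    have h3 : (φ v).val < 3 := (φ v).isLt
    have hval : (φ v).val = 0 ∨ (φ v).val = 1 ∨ (φ v).val = 2 := by omega
    rcases hval with h | h | h
    · exact Or.inl (Fin.ext (by simpa using h))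
    · exact Or.inr (Or.inl (Fin.ext (by simpa using h)))
    · exact Or.inr (Or.inr (Fin.ext (by simpa using h)))
  have hc0 : ∀ v, φ v = 0 → c v = 0 := by
    intro v h
    rw [hcdef]
    simp [h]
  have hc1 : ∀ v, φ v = 1 → c v = θ v := by
    intro v h
    rw [hcdef]
    simp [h]
  have hc2 : ∀ v, φ v = 2 → c v = -θ v := by
    intro v h
    rw [hcdef]
    simp [h]
  have hmem : ∀ v : V, c v = 0 ∨ c v = 1 ∨ c v = -1 := by
    intro v
    rcases hcases v with h | h | h
    · exact Or.inl (hc0 v h)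
    · rw [hc1 v h]
      rcases hθpm v with h2 | h2
      · exact Or.inr (Or.inl h2)
      · exact Or.inr (Or.inr h2)
    · rw [hc2 v h]
      rcases hθpm v with h2 | h2
      · exact Or.inr (Or.inr (by rw [h2]))
      · exact Or.inr (Or.inl (by rw [h2]; norm_num))
  have hphi0 : ∀ x, c x = 0 → φ x = 0 := by
    intro x hx
    rcases hcases x with h | h | h
    · exact h
    · exfalso
      rw [hc1 x h] at hx
      rcases hθpm x with h2 | h2 <;> rw [h2] at hx <;> norm_num at hx
    · exfalso
      rw [hc2 x h] at hx
      rcases hθpm x with h2 | h2 <;> rw [h2] at hx <;> norm_num at hx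
  have hclassAB : ∀ x : V, (c x = 1 ∨ c x = -1) →
      (φ x = 1 ∧ c x = θ x) ∨ (φ x = 2 ∧ c x = -θ x) := by
    intro x hx
    rcases hcases x with h | h | h
    · exfalso
      rw [hc0 x h] at hx
      rcases hx with hx | hx <;> norm_num at hx
    · exact Or.inl ⟨h, hc1 x h⟩
    · exact Or.inr ⟨h, hc2 x h⟩
  have hacyclic : IsSignedTreeColoring G σ c := by
    intro u v0 w hw
    have hedge : ∀ a b : V, (signedSubgraph G σ c (c u)).Adj a b → φ a = φ b := by
      intro a b hab
      obtain ⟨hGab, heq, hca, hcb⟩ := hab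
      have hσab : σ s(a, b) = θ a * θ b := hθprop hGab
      rcases hmem u with hu0 | hu1 | hun1
      · rw [hu0] at hca hcb
        simp only [neg_zero, or_self] at hca hcb
        rw [hphi0 a hca, hphi0 b hcb]
      · rw [hu1] at hca hcb
        have hca' : c a = 1 ∨ c a = -1 := hca
        have hcb' : c b = 1 ∨ c b = -1 := hcb
        have hA := hclassAB a hca'
        have hB := hclassAB b hcb'
        rw [hσab] at heq
        rcases hA with ⟨h1, h2⟩ | ⟨h1, h2⟩ <;> rcases hB with ⟨h3, h4⟩ | ⟨h3, h4⟩
        · rw [h1, h3]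
        · exfalso
          rw [h2, h4] at heq
          rcases hθpm a with ha | ha <;> rcases hθpm b with hb | hb <;>
            rw [ha, hb] at heq <;> rcases heq with h | h <;> norm_num at h
        · exfalso
          rw [h2, h4] at heq
          rcases hθpm a with ha | ha <;> rcases hθpm b with hb | hb <;>
            rw [ha, hb] at heq <;> rcases heq with h | h <;> norm_num at h
        · rw [h1, h3]
      · rw [hun1] at hca hcb
        have hca' : c a = 1 ∨ c a = -1 := by
          rcases hca with h | h
          · exact Or.inr h
          · exact Or.inl (by rw [h]; norm_num)
        have hcb' : c b = 1 ∨ c b = -1 := by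
          rcases hcb with h | h
          · exact Or.inr h
          · exact Or.inl (by rw [h]; norm_num)
        have hA := hclassAB a hca'
        have hB := hclassAB b hcb'
        rw [hσab] at heq
        rcases hA with ⟨h1, h2⟩ | ⟨h1, h2⟩ <;> rcases hB with ⟨h3, h4⟩ | ⟨h3, h4⟩
        · rw [h1, h3]
        · exfalso
          rw [h2, h4] at heq
          rcases hθpm a with ha | ha <;> rcases hθpm b with hb | hb <;>
            rw [ha, hb] at heq <;> rcases heq with h | h <;> norm_num at h
        · exfalso
          rw [h2, h4] at heq
          rcases hθpm a with ha | ha <;> rcases hθpm b with hb | hb <;>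
            rw [ha, hb] at heq <;> rcases heq with h | h <;> norm_num at h
        · rw [h1, h3]
    have hconst := Stmt6Aux.walk_const hedge w
    set hom : signedSubgraph G σ c (c u) →g G := ⟨id, fun h => h.1⟩ with hhom
    have hGcyc : (w.map hom).IsCycle := by
      rw [SimpleGraph.Walk.map_isCycle_iff_of_injective
        (show Function.Injective ⇑hom from fun a b h => h)]
      exact hw
    refine hφ (φ v0) v0 (w.map hom) hGcyc ?_
    intro x hx
    rw [SimpleGraph.Walk.support_map] at hx
    obtain ⟨x', hx', hhx⟩ := List.mem_map.mp hx
    have hxx : x' = x := hhx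
    rw [Set.mem_setOf_eq, ← hxx]
    exact hconst x' hx'
  have hMset : ∀ v, c v ∈ Mset 3 := by
    intro v
    have h2 : (3 : ℕ) % 2 = 0 → c v ≠ 0 := by
      intro h
      norm_num at h
    refine ⟨?_, h2⟩
    rcases hmem v with h | h | h <;> rw [h] <;> norm_num
  have hcolors : ∀ v, c v ∈ ({-1, 0, 1} : Set ℤ) := by
    intro v
    rcases hmem v with h | h | h <;> rw [h] <;> simp
  constructor
  · apply Nat.sInf_le
    exact ⟨c, hMset, hacyclic⟩
  · exact ⟨c, hacyclic, hcolors⟩
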